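/- arXiv:2501.04501 — 6 statements merged into one kernel-verified Lean document; each statement's English description precedes it below -/
import Mathlib

section
/- Let M and N be connected affine algebraic groups with M a closed normal subgroup of N, acting on an affine Poisson variety X by Poisson automorphisms, with an N-equivariant moment map μ : X → m* for the M-action (i.e., the comorphism μ♯ : m → C[X] is a Lie algebra homomorphism whose composition with F ↦ {F,·} equals the action of m by derivations). Then the affine GIT quotient μ⁻¹(0) // N = Spec C[μ⁻¹(0)]^N carries a natural Poisson structure; more precisely, the subalgebra P = {F ∈ C[X] : x·F ∈ I for all x ∈ n}, where I is the ideal generated by μ♯(m), is closed under the Poisson bracket and Poisson-normalizes I. -/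
/-- Hamiltonian reduction with two groups: if `M ⊴ N` are connected
affine algebraic groups acting on an affine Poisson variety `X` by Poisson automorphisms,
with an `N`-equivariant moment map `μ : X → m*` for the `M`-action, then the subalgebra
`P = {F ∈ ℂ[X] | x·F ∈ I for all x ∈ n}` (where `I` is the ideal generated by `μ♯(m)`)
is closed under the Poisson bracket and Poisson-normalizes `I`; hence `μ⁻¹(0) ⫽ N` is
Poisson.  We work at the level of coordinate rings: `R = ℂ[X]` is a commutative
Poisson algebra, `n` is the Lie algebra of `N`, `m ⊆ n` the Lie ideal corresponding to
the normal subgroup `M`, `act` is the infinitesimal action by derivations (Poisson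
derivations, since `N` acts by Poisson automorphisms) and `mu` is the comoment map. -/
theorem statement0
    (R : Type*) [CommRing R] [Algebra ℂ R]
    (pb : R →ₗ[ℂ] R →ₗ[ℂ] R)
    (hskew : ∀ a b : R, pb a b = - pb b a)
    (hleib : ∀ a b c : R, pb (a * b) c = a * pb b c + pb a c * b)
    (hjac : ∀ a b c : R, pb a (pb b c) = pb (pb a b) c + pb b (pb a c))
    (n : Type*) [LieRing n] [LieAlgebra ℂ n]
    (m : LieSubalgebra ℂ n)
    (hm_ideal : ∀ x : n, ∀ y ∈ m, ⁅x, y⁆ ∈ m)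
    (act : n →ₗ[ℂ] (R →ₗ[ℂ] R))
    (hact_der : ∀ (x : n) (a b : R), act x (a * b) = act x a * b + a * act x b)
    (hact_lie : ∀ x y : n, act ⁅x, y⁆ = act x ∘ₗ act y - act y ∘ₗ act x)
    (hact_pois : ∀ (x : n) (a b : R), act x (pb a b) = pb (act x a) b + pb a (act x b))
    (mu : m →ₗ[ℂ] R)
    (hmu_lie : ∀ x y : m, mu ⁅x, y⁆ = pb (mu x) (mu y))
    (hmu_mom : ∀ (x : m) (a : R), pb (mu x) a = act (x : n) a)
    (I : Ideal R) (hI : I = Ideal.span (Set.range mu)) :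
    (∀ F G : R, (∀ x : n, act x F ∈ I) → (∀ x : n, act x G ∈ I) →
        (∀ x : n, act x (pb F G) ∈ I)) ∧
    (∀ F a : R, (∀ x : n, act x F ∈ I) → a ∈ I → pb a F ∈ I) := by
  have key : ∀ F : R, (∀ x : n, act x F ∈ I) → ∀ a ∈ I, pb a F ∈ I := by
    intro F hF a ha
    rw [hI] at ha
    have : a ∈ I ∧ pb a F ∈ I := by
      refine Submodule.span_induction (p := fun a _ => a ∈ I ∧ pb a F ∈ I) ?_ ?_ ?_ ?_ ha
      · rintro g ⟨x, rfl⟩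
        refine ⟨?_, ?_⟩
        · rw [hI]; exact Ideal.subset_span ⟨x, rfl⟩
        · rw [hmu_mom]; exact hF x
      · simp
      · rintro a b _ _ ⟨ha1, ha2⟩ ⟨hb1, hb2⟩
        exact ⟨I.add_mem ha1 hb1, by rw [map_add, LinearMap.add_apply]; exact I.add_mem ha2 hb2⟩
      · rintro c a _ ⟨ha1, ha2⟩
        refine ⟨I.smul_mem c ha1, ?_⟩
        have : pb (c * a) F = c * pb a F + pb c F * a := hleib c a F
        simpa [smul_eq_mul, this, mul_comm] using I.add_mem (I.mul_mem_left c ha2) (I.mul_mem_right (pb c F) ha1)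
    exact this.2
  constructor
  · intro F G hF hG x
    rw [hact_pois]
    refine I.add_mem (key G hG _ (hF x)) ?_
    rw [hskew]
    exact I.neg_mem (key F hF _ (hG x))
  · intro F a hF ha
    exact key F hF a ha
end

section
/- Let V be a vertex algebra with Li filtration F^p V. Then for all p, q ∈ Z and n ∈ Z, the n-th product satisfies (F^p V)_{(n)} (F^q V) ⊆ F^{p+q-n-1} V, and moreover for n ≥ 0, (F^p V)_{(n)} (F^q V) ⊆ F^{p+q-n} V. -/
open scoped BigOperators

variable {V : Type*} [AddCommGroup V] [Module ℂ V]

/-- Iterated normally ordered product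
`:∂^{n₁}(a₁) ⋯ ∂^{n_k}(a_k): = n₁! ⋯ n_k! ⬝ a₁_{(-n₁-1)} (a₂_{(-n₂-1)} (⋯ |0⟩))`,
encoded (up to the nonzero factorial scalars, which do not change spans) by iterated
`(-n-1)`-st products applied to the vacuum. -/
noncomputable def iterProd (vac : V) (nprod : ℤ → V →ₗ[ℂ] V →ₗ[ℂ] V) :
    List (V × ℕ) → V
  | [] => vac
  | (a, n) :: L => nprod (-(n : ℤ) - 1) a (iterProd vac nprod L)

/-- The Li filtration of a vertex algebra: `F^p V = V` for `p ≤ 0`, and for `p > 0`,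
`F^p V` is spanned by the iterated normally ordered products
`:∂^{n₁}(a₁) ⋯ ∂^{n_k}(a_k):` with `Σᵢ nᵢ ≥ p`. -/
noncomputable def LiFil (vac : V) (nprod : ℤ → V →ₗ[ℂ] V →ₗ[ℂ] V) (p : ℤ) :
    Submodule ℂ V :=
  if p ≤ 0 then ⊤ else
    Submodule.span ℂ {v : V | ∃ L : List (V × ℕ),
      p ≤ ((L.map Prod.snd).sum : ℤ) ∧ v = iterProd vac nprod L}

/-- Generalized binomial coefficient `binom(m, i)` for `m : ℤ`, as a complex number. -/
noncomputable def zb (m : ℤ) (i : ℕ) : ℂ :=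
  (∏ j ∈ Finset.range i, ((m : ℂ) - (j : ℂ))) / (i.factorial : ℂ)

section LiAux

def liSet (vac : V) (nprod : ℤ → V →ₗ[ℂ] V →ₗ[ℂ] V) (p : ℤ) : Set V :=
  {v : V | ∃ L : List (V × ℕ),
      p ≤ ((L.map Prod.snd).sum : ℤ) ∧ v = iterProd vac nprod L}

lemma zb_zero_zero : zb 0 0 = 1 := by simp [zb]

lemma zb_zero (i : ℕ) (hi : i ≠ 0) : zb 0 i = 0 := by
  unfold zb
  rw [Finset.prod_eq_zero (Finset.mem_range.mpr (Nat.pos_of_ne_zero hi)) (by simp)]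
  simp

lemma liFil_eq_span (vac : V) (nprod : ℤ → V →ₗ[ℂ] V →ₗ[ℂ] V)
    (hvac_create : ∀ a : V, nprod (-1) a vac = a) (p : ℤ) :
    LiFil vac nprod p = Submodule.span ℂ (liSet vac nprod p) := by
  unfold LiFil liSet
  split_ifs with h
  · symm
    rw [Submodule.eq_top_iff']
    intro w
    apply Submodule.subset_span
    refine ⟨[(w, 0)], by simpa using h, ?_⟩
    simp [iterProd, hvac_create]
  · rfl

lemma liFil_antitone (vac : V) (nprod : ℤ → V →ₗ[ℂ] V →ₗ[ℂ] V)
    (hvac_create : ∀ a : V, nprod (-1) a vac = a) {p p' : ℤ} (h : p ≤ p') :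
    LiFil vac nprod p' ≤ LiFil vac nprod p := by
  rw [liFil_eq_span vac nprod hvac_create, liFil_eq_span vac nprod hvac_create]
  exact Submodule.span_mono fun v ⟨L, hL, hv⟩ => ⟨L, le_trans h hL, hv⟩

lemma iterProd_mem (vac : V) (nprod : ℤ → V →ₗ[ℂ] V →ₗ[ℂ] V)
    (hvac_create : ∀ a : V, nprod (-1) a vac = a) (L : List (V × ℕ)) :
    iterProd vac nprod L ∈ LiFil vac nprod ((L.map Prod.snd).sum : ℤ) := by
  rw [liFil_eq_span vac nprod hvac_create]
  exact Submodule.subset_span ⟨L, le_refl _, rfl⟩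

lemma lemA (vac : V) (nprod : ℤ → V →ₗ[ℂ] V →ₗ[ℂ] V)
    (hvac_create : ∀ a : V, nprod (-1) a vac = a)
    (a : V) (M : ℕ) (r : ℤ) (w : V) (hw : w ∈ LiFil vac nprod r) :
    nprod (-(M : ℤ) - 1) a w ∈ LiFil vac nprod (r + M) := by
  rw [liFil_eq_span vac nprod hvac_create] at hw ⊢
  have hsub : liSet vac nprod r ⊆
      (Submodule.span ℂ (liSet vac nprod (r + M))).comap (nprod (-(M : ℤ) - 1) a) := by
    rintro v ⟨L, hL, rfl⟩
    simp only [SetLike.mem_coe, Submodule.mem_comap]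
    refine Submodule.subset_span ⟨(a, M) :: L, ?_, rfl⟩
    simp only [List.map_cons, List.sum_cons, Nat.cast_add]
    omega
  exact Submodule.span_le.mpr hsub hw

lemma finsum_mem_submodule (S : Submodule ℂ V) (f : ℕ → V) (h : ∀ i, f i ∈ S) :
    ∑ᶠ i, f i ∈ S := by
  by_cases hf : (Function.support f).Finite
  · rw [finsum_eq_sum f hf]
    exact Submodule.sum_mem _ fun i _ => h i
  · rw [finsum_of_infinite_support hf]
    exact S.zero_mem

variable (vac : V) (nprod : ℤ → V →ₗ[ℂ] V →ₗ[ℂ] V)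
variable (hborcherds : ∀ (a b c : V) (p q m : ℤ),
      (∑ᶠ i : ℕ, zb m i • nprod (m + q - i) (nprod (p + i) a b) c)
        = ∑ᶠ i : ℕ, ((-1 : ℂ) ^ i * zb p i) •
            (nprod (m + p - i) a (nprod (q + i) b c)
              - ((-1 : ℂ) ^ p) • nprod (p + q - i) b (nprod (m + i) a c)))

include hborcherds in
lemma iterate_formula (a u c : V) (m' n : ℤ) :
    nprod n (nprod m' a u) c = ∑ᶠ i : ℕ, ((-1 : ℂ) ^ i * zb m' i) •
      (nprod (m' - i) a (nprod (n + i) u c)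
        - ((-1 : ℂ) ^ m') • nprod (m' + n - i) u (nprod (i : ℤ) a c)) := by
  have h := hborcherds a u c m' n 0
  rw [finsum_eq_single _ 0 (fun i hi => by rw [zb_zero i hi, zero_smul])] at h
  simpa [zb_zero_zero] using h

include hborcherds in
lemma comm_formula (a c w : V) (n q' : ℤ) :
    nprod n a (nprod q' c w) =
      (∑ᶠ i : ℕ, zb n i • nprod (n + q' - i) (nprod (i : ℤ) a c) w)
        + nprod q' c (nprod n a w) := by
  have h := hborcherds a c w 0 q' n
  have hside : ∀ i : ℕ, i ≠ 0 → ((-1 : ℂ) ^ i * zb 0 i) •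
      (nprod (n + 0 - i) a (nprod (q' + i) c w)
        - ((-1 : ℂ) ^ (0 : ℤ)) • nprod (0 + q' - i) c (nprod (n + i) a w)) = 0 := by
    intro i hi
    rw [zb_zero i hi, mul_zero, zero_smul]
  rw [finsum_eq_single _ 0 hside] at h
  simp only [Nat.cast_zero, add_zero, sub_zero, zero_add, pow_zero, zb_zero_zero, mul_one,
    one_smul, zpow_zero] at h
  rw [eq_comm, sub_eq_iff_eq_add] at h
  simpa using h

include hborcherds in
lemma lemD (hvac_create : ∀ a : V, nprod (-1) a vac = a)
    (hvac_ann : ∀ (a : V) (n : ℤ), 0 ≤ n → nprod n a vac = 0) :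
    ∀ L : List (V × ℕ), ∀ (a : V) (n : ℤ), 0 ≤ n →
      nprod n a (iterProd vac nprod L) ∈
        LiFil vac nprod (((L.map Prod.snd).sum : ℤ) - n) := by
  intro L
  induction L with
  | nil =>
    intro a n hn
    show nprod n a vac ∈ _
    rw [hvac_ann a n hn]
    exact Submodule.zero_mem _
  | cons hd tl ih =>
    obtain ⟨c, m'⟩ := hd
    intro a n hn
    have hsum : ((((c, m') :: tl).map Prod.snd).sum : ℤ)
        = (m' : ℤ) + ((tl.map Prod.snd).sum : ℤ) := by
      simp
    show nprod n a (nprod (-(m' : ℤ) - 1) c (iterProd vac nprod tl)) ∈ _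
    rw [comm_formula nprod hborcherds a c (iterProd vac nprod tl) n (-(m' : ℤ) - 1)]
    apply Submodule.add_mem
    · apply finsum_mem_submodule
      intro i
      apply Submodule.smul_mem
      rcases le_or_gt 0 (n + (-(m' : ℤ) - 1) - i) with hd' | hd'
      · refine liFil_antitone vac nprod hvac_create ?_
          (ih (nprod (i : ℤ) a c) (n + (-(m' : ℤ) - 1) - i) hd')
        rw [hsum]
        omega
      · have hM : (((m' : ℤ) + i - n).toNat : ℤ) = (m' : ℤ) + i - n := by
          have : (0 : ℤ) ≤ (i : ℤ) := Int.natCast_nonneg i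
          omega
        have h2 := lemA vac nprod hvac_create (nprod (i : ℤ) a c)
          (((m' : ℤ) + i - n).toNat) _ _
          (iterProd_mem vac nprod hvac_create tl)
        rw [show (n + (-(m' : ℤ) - 1) - i) = -((((m' : ℤ) + i - n).toNat : ℤ)) - 1 by omega]
        refine liFil_antitone vac nprod hvac_create ?_ h2
        rw [hsum, hM]
        have : (0 : ℤ) ≤ (i : ℤ) := Int.natCast_nonneg i
        omega
    · have h1 := ih a n hn
      have h2 := lemA vac nprod hvac_create c m' _ _ h1
      refine liFil_antitone vac nprod hvac_create ?_ h2
      rw [hsum]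
      omega

include hborcherds in
lemma lemKey (hvac_create : ∀ a : V, nprod (-1) a vac = a)
    (hvac_ann : ∀ (a : V) (n : ℤ), 0 ≤ n → nprod n a vac = 0)
    (hvac_left : ∀ (a : V) (n : ℤ), nprod n vac a = if n = -1 then a else 0) :
    ∀ L : List (V × ℕ), ∀ (n q : ℤ) (b : V), b ∈ LiFil vac nprod q →
      nprod n (iterProd vac nprod L) b ∈
        LiFil vac nprod (((L.map Prod.snd).sum : ℤ) + q - n -
          (if 0 ≤ n then 0 else 1)) := by
  intro L
  induction L with
  | nil =>
    intro n q b hb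
    show nprod n vac b ∈ _
    rw [hvac_left b n]
    by_cases h1 : n = -1
    · rw [if_pos h1]
      subst h1
      rw [if_neg (by norm_num)]
      refine liFil_antitone vac nprod hvac_create ?_ hb
      simp only [List.map_nil, List.sum_nil, Nat.cast_zero]
      omega
    · rw [if_neg h1]
      exact Submodule.zero_mem _
  | cons hd tl ih =>
    obtain ⟨a, m⟩ := hd
    intro n q b hb
    have hsum : ((((a, m) :: tl).map Prod.snd).sum : ℤ)
        = (m : ℤ) + ((tl.map Prod.snd).sum : ℤ) := by simp
    rw [liFil_eq_span vac nprod hvac_create q] at hb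
    have hsub : liSet vac nprod q ⊆
        (LiFil vac nprod (((((a, m) :: tl).map Prod.snd).sum : ℤ) + q - n -
          (if 0 ≤ n then 0 else 1))).comap (nprod n (iterProd vac nprod ((a, m) :: tl))) := by
      rintro v ⟨L', hL', rfl⟩
      simp only [SetLike.mem_coe, Submodule.mem_comap]
      have hmain : nprod n (iterProd vac nprod ((a, m) :: tl)) (iterProd vac nprod L') ∈
          LiFil vac nprod (((((a, m) :: tl).map Prod.snd).sum : ℤ) +
            ((L'.map Prod.snd).sum : ℤ) - n - (if 0 ≤ n then 0 else 1)) := by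
        show nprod n (nprod (-(m : ℤ) - 1) a (iterProd vac nprod tl))
          (iterProd vac nprod L') ∈ _
        rw [iterate_formula nprod hborcherds a (iterProd vac nprod tl)
          (iterProd vac nprod L') (-(m : ℤ) - 1) n]
        apply finsum_mem_submodule
        intro i
        apply Submodule.smul_mem
        apply Submodule.sub_mem
        · have hin := ih (n + i) _ _ (iterProd_mem vac nprod hvac_create L')
          have hout := lemA vac nprod hvac_create a (m + i) _ _ hin
          rw [show ((-(m : ℤ) - 1) - (i : ℤ)) = -(((m + i : ℕ)) : ℤ) - 1 by push_cast; ring]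
          refine liFil_antitone vac nprod hvac_create ?_ hout
          rw [hsum]
          have h0 : (0 : ℤ) ≤ (i : ℤ) := Int.natCast_nonneg i
          push_cast
          split_ifs <;> omega
        · apply Submodule.smul_mem
          have hDi := lemD vac nprod hborcherds hvac_create hvac_ann L' a (i : ℤ)
            (Int.natCast_nonneg i)
          have h2 := ih ((-(m : ℤ) - 1) + n - i) _ _ hDi
          refine liFil_antitone vac nprod hvac_create ?_ h2
          rw [hsum]
          have h0 : (0 : ℤ) ≤ (i : ℤ) := Int.natCast_nonneg i
          split_ifs <;> omega
      refine liFil_antitone vac nprod hvac_create ?_ hmain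
      set e := (if 0 ≤ n then (0 : ℤ) else 1)
      omega
    exact Submodule.span_le.mpr hsub hb

end LiAux

/-- For a vertex algebra `V` (vacuum `vac`, translation `T`,
`n`-th products `nprod n`, subject to the truncation, vacuum, translation and
Borcherds identity axioms), the Li filtration satisfies
`(F^p V)_{(n)} (F^q V) ⊆ F^{p+q-n-1} V` for all `n : ℤ`, and moreover
`(F^p V)_{(n)} (F^q V) ⊆ F^{p+q-n} V` for `n ≥ 0`. -/
theorem statement3
    (vac : V) (T : Module.End ℂ V) (nprod : ℤ → V →ₗ[ℂ] V →ₗ[ℂ] V)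
    (htrunc : ∀ a b : V, ∃ N : ℤ, ∀ n : ℤ, N ≤ n → nprod n a b = 0)
    (hvac_create : ∀ a : V, nprod (-1) a vac = a)
    (hvac_ann : ∀ (a : V) (n : ℤ), 0 ≤ n → nprod n a vac = 0)
    (hvac_left : ∀ (a : V) (n : ℤ), nprod n vac a = if n = -1 then a else 0)
    (htrans : ∀ (a b : V) (n : ℤ), nprod n (T a) b = (-n : ℤ) • nprod (n - 1) a b)
    (htrans_der : ∀ (a b : V) (n : ℤ),
      T (nprod n a b) = nprod n (T a) b + nprod n a (T b))
    (hborcherds : ∀ (a b c : V) (p q m : ℤ),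
      (∑ᶠ i : ℕ, zb m i • nprod (m + q - i) (nprod (p + i) a b) c)
        = ∑ᶠ i : ℕ, ((-1 : ℂ) ^ i * zb p i) •
            (nprod (m + p - i) a (nprod (q + i) b c)
              - ((-1 : ℂ) ^ p) • nprod (p + q - i) b (nprod (m + i) a c))) :
    ∀ p q n : ℤ, ∀ a ∈ LiFil vac nprod p, ∀ b ∈ LiFil vac nprod q,
      nprod n a b ∈ LiFil vac nprod (p + q - n - 1) ∧
      (0 ≤ n → nprod n a b ∈ LiFil vac nprod (p + q - n)) := by
  intro p q n a ha b hb
  have hmain : nprod n a b ∈ LiFil vac nprod (p + q - n - (if 0 ≤ n then 0 else 1)) := by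
    rw [liFil_eq_span vac nprod hvac_create p] at ha
    have hsub : liSet vac nprod p ⊆
        (LiFil vac nprod (p + q - n - (if 0 ≤ n then 0 else 1))).comap
          ((LinearMap.flip (nprod n)) b) := by
      rintro v ⟨L, hL, rfl⟩
      simp only [SetLike.mem_coe, Submodule.mem_comap, LinearMap.flip_apply]
      refine liFil_antitone vac nprod hvac_create ?_
        (lemKey vac nprod hborcherds hvac_create hvac_ann hvac_left L n q b hb)
      set e := (if 0 ≤ n then (0 : ℤ) else 1)
      omega
    have h := Submodule.span_le.mpr hsub ha
    simpa only [Submodule.mem_comap, LinearMap.flip_apply] using h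
  constructor
  · refine liFil_antitone vac nprod hvac_create ?_ hmain
    split_ifs <;> omega
  · intro hn
    rwa [if_pos hn, sub_zero] at hmain
end

section
/- Let (C•, d) be a cochain complex of vector spaces with an exhaustive decreasing filtration Fil^p C• preserved by d, such that the complex splits as a direct sum of finite-dimensional graded subcomplexes on each of which the filtration is finite. If the associated graded complex (gr C•, gr d) has cohomology concentrated in degree 0, then H^n(C•, d) = 0 for n ≠ 0, and the natural map gr H^0(C•, d) → H^0(gr C•, gr d) is an isomorphism. -/
/-!
Projecting onto the summands `S i`, which are subcomplexes compatible with the filtration,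
reduces everything to a single `S i`, on which the filtration is finite. There a cocycle
`x ∈ Fil^p` of nonzero degree is a cocycle of `gr^p`, so `x - d y ∈ Fil^{p+1}` for some
`y ∈ Fil^p`; iterating pushes `x` into `Fil^{p₁} ∩ S i = 0`. Hence every cocycle of nonzero
degree in `Fil^p` is the coboundary of an element of `Fil^p`. This gives the vanishing of
`H^n` by exhaustiveness; in degree `0` it turns `d x ∈ Fil^{p+1}` into `d x = d y` with
`y ∈ Fil^{p+1}`, so `x - y` is a cocycle lifting the class of `x` in `H⁰(gr)`.
-/

theorem Antitone.inf_le_of_inf_le_sup_succ {L : Type*} [Lattice L] [OrderBot L]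
    [IsModularLattice L] {G a : ℤ → L} {z : L} (hG : Antitone G) (ha : Antitone a)
    (haz : ∀ p, a p ≤ z) {p₁ : ℤ} (hbot : G p₁ ⊓ z = ⊥)
    (hstep : ∀ p, G p ⊓ z ≤ a p ⊔ G (p + 1)) (p : ℤ) : G p ⊓ z ≤ a p := by
  suffices h : ∀ k : ℕ, ∀ p, p₁ ≤ p + k → G p ⊓ z ≤ a p from
    h (p₁ - p).toNat p (by omega)
  intro k
  induction k with
  | zero =>
    intro p hp
    calc G p ⊓ z ≤ G p₁ ⊓ z := inf_le_inf_right z (hG (by simpa using hp))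
      _ = ⊥ := hbot
      _ ≤ a p := bot_le
  | succ k ih =>
    intro p hp
    calc G p ⊓ z ≤ (a p ⊔ G (p + 1)) ⊓ z := le_inf (hstep p) inf_le_right
      _ = a p ⊔ G (p + 1) ⊓ z := sup_inf_assoc_of_le _ (haz p)
      _ ≤ a p := sup_le le_rfl <| (ih (p + 1) (by push_cast at hp; omega)).trans (ha (by omega))

namespace DirectSum

variable {ι M σ : Type*} [DecidableEq ι] [AddCommMonoid M] [SetLike σ M]
  [AddSubmonoidClass σ M]

theorem map_decompose_of_map_mem {N τ F : Type*} [AddCommMonoid N] [SetLike τ N]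
    [AddSubmonoidClass τ N] {A : ι → σ} {B : ι → τ} [Decomposition A] [Decomposition B]
    [FunLike F M N] [AddMonoidHomClass F M N] (f : F) (hf : ∀ i, ∀ x ∈ A i, f x ∈ B i)
    (x : M) (i : ι) :
    f (decompose A x i) = decompose B (f x) i := by
  induction x using Decomposition.inductionOn A with
  | zero => simp
  | @homogeneous j m =>
    by_cases hji : j = i
    · subst hji
      rw [decompose_of_mem_same A m.2, decompose_of_mem_same B (hf j _ m.2)]
    · rw [decompose_of_mem_ne A m.2 hji, decompose_of_mem_ne B (hf j _ m.2) hji, map_zero]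
  | add x y hx hy => simp only [decompose_add, add_apply, AddMemClass.coe_add, map_add, hx, hy]

theorem SetLike.isHomogeneous_of_le_iSup_inf {R : Type*} [Semiring R] [Module R M]
    {A : ι → Submodule R M} [Decomposition A] {P : Submodule R M} (hP : P ≤ ⨆ i, P ⊓ A i) :
    SetLike.IsHomogeneous A P := by
  intro i x hx
  refine Submodule.iSup_induction _ (motive := fun x => (decompose A x i : M) ∈ P) (hP hx)
    (fun j z hz => ?_) (by simp) (fun y z hy hz => ?_)
  · by_cases hji : j = i
    · subst hji; rw [decompose_of_mem_same A hz.2]; exact hz.1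
    · rw [decompose_of_mem_ne A hz.2 hji]; exact zero_mem P
  · rw [decompose_add, add_apply, Submodule.coe_add]; exact add_mem hy hz

end DirectSum

section FilteredComplex

open DirectSum

variable {R : Type*} [Ring R] {C : ℤ → Type*} [∀ n, AddCommGroup (C n)]
  [∀ n, Module R (C n)]
  {d : ∀ n : ℤ, C n →ₗ[R] C (n + 1)} {Fil : ℤ → ∀ n : ℤ, Submodule R (C n)}
  {ι : Type*} [DecidableEq ι] {S : ι → ∀ n : ℤ, Submodule R (C n)}
  [∀ n, Decomposition fun i => S i n]

theorem fil_inf_summand_inf_ker_le_map (hdd : ∀ (n : ℤ) (x : C n), d (n + 1) (d n x) = 0)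
    (hmono : ∀ p q : ℤ, ∀ n : ℤ, p ≤ q → Fil q n ≤ Fil p n)
    (hS_d : ∀ (i : ι) (n : ℤ), ∀ x ∈ S i n, d n x ∈ S i (n + 1))
    (hFil_hom : ∀ p n, SetLike.IsHomogeneous (fun i => S i n) (Fil p n)) {n : ℤ}
    (hgr : ∀ p : ℤ, ∀ x ∈ Fil p (n + 1), d (n + 1) x = 0 →
      ∃ y ∈ Fil p n, x - d n y ∈ Fil (p + 1) (n + 1))
    {i : ι} {p₁ : ℤ} (hbot : Fil p₁ (n + 1) ⊓ S i (n + 1) = ⊥) (p : ℤ) :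
    Fil p (n + 1) ⊓ (S i (n + 1) ⊓ LinearMap.ker (d (n + 1))) ≤
      (Fil p n ⊓ S i n).map (d n) := by
  refine Antitone.inf_le_of_inf_le_sup_succ (p₁ := p₁) (fun p q h => hmono p q (n + 1) h)
    (fun p q h => Submodule.map_mono (inf_le_inf_right _ (hmono p q n h))) ?_ ?_ ?_ p
  · rintro p _ ⟨y, hy, rfl⟩
    exact ⟨hS_d i n y hy.2, hdd n y⟩
  · rw [← inf_assoc, hbot, bot_inf_eq]
  · rintro p x ⟨hxF, hxS, hdx⟩
    obtain ⟨y, hyF, hres⟩ := hgr p x hxF hdx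
    let yi := decompose (fun i => S i n) y i
    have hyi : (yi : C n) ∈ Fil p n ⊓ S i n := ⟨hFil_hom p n i hyF, yi.2⟩
    have hproj : (decompose (fun i => S i (n + 1)) (x - d n y) i : C (n + 1)) = x - d n yi := by
      rw [decompose_sub, DirectSum.sub_apply, Submodule.coe_sub, decompose_of_mem_same _ hxS,
        ← map_decompose_of_map_mem (d n) (hS_d · n)]
    have hres_i : x - d n yi ∈ Fil (p + 1) (n + 1) := hproj ▸ hFil_hom (p + 1) (n + 1) i hres
    exact Submodule.mem_sup.2
      ⟨d n yi, ⟨yi, hyi, rfl⟩, x - d n yi, hres_i, add_sub_cancel _ _⟩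

theorem fil_inf_ker_le_map (hdd : ∀ (n : ℤ) (x : C n), d (n + 1) (d n x) = 0)
    (hmono : ∀ p q : ℤ, ∀ n : ℤ, p ≤ q → Fil q n ≤ Fil p n)
    (hS_d : ∀ (i : ι) (n : ℤ), ∀ x ∈ S i n, d n x ∈ S i (n + 1))
    (hFil_hom : ∀ p n, SetLike.IsHomogeneous (fun i => S i n) (Fil p n)) {n : ℤ}
    (hgr : ∀ p : ℤ, ∀ x ∈ Fil p (n + 1), d (n + 1) x = 0 →
      ∃ y ∈ Fil p n, x - d n y ∈ Fil (p + 1) (n + 1))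
    (hfin : ∀ i, ∃ p₁, Fil p₁ (n + 1) ⊓ S i (n + 1) = ⊥) (p : ℤ) :
    Fil p (n + 1) ⊓ LinearMap.ker (d (n + 1)) ≤ (Fil p n).map (d n) := by
  classical
  rintro x ⟨hxF, hdx⟩
  rw [← sum_support_decompose (fun i => S i (n + 1)) x]
  refine Submodule.sum_mem _ fun i _ => ?_
  obtain ⟨p₁, hbot⟩ := hfin i
  have hdxi : d (n + 1) (decompose (fun i => S i (n + 1)) x i) = 0 := by
    rw [map_decompose_of_map_mem (d (n + 1)) (hS_d · (n + 1)), LinearMap.mem_ker.1 hdx,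
      decompose_zero, DirectSum.zero_apply, ZeroMemClass.coe_zero]
  exact Submodule.map_mono inf_le_left <|
    fil_inf_summand_inf_ker_le_map hdd hmono hS_d hFil_hom hgr hbot p
      ⟨hFil_hom p (n + 1) i hxF, (decompose (fun i => S i (n + 1)) x i).2, hdxi⟩

end FilteredComplex

theorem statement4_general
    (C : ℤ → Type*) [∀ n, AddCommGroup (C n)] [∀ n, Module ℂ (C n)]
    (d : ∀ n : ℤ, C n →ₗ[ℂ] C (n + 1))
    (hdd : ∀ (n : ℤ) (x : C n), d (n + 1) (d n x) = 0)
    (Fil : ℤ → ∀ n : ℤ, Submodule ℂ (C n))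
    (hmono : ∀ p q : ℤ, ∀ n : ℤ, p ≤ q → Fil q n ≤ Fil p n)
    (hexh : ∀ (n : ℤ) (x : C n), ∃ p : ℤ, x ∈ Fil p n)
    -- the splitting into finite-dimensional graded subcomplexes
    (ι : Type*) [DecidableEq ι] (S : ι → ∀ n : ℤ, Submodule ℂ (C n))
    (hinternal : ∀ n : ℤ, DirectSum.IsInternal fun i : ι => S i n)
    (hS_d : ∀ (i : ι) (n : ℤ), ∀ x ∈ S i n, d n x ∈ S i (n + 1))
    (hFil_S : ∀ (p n : ℤ), Fil p n = ⨆ i : ι, (Fil p n ⊓ S i n))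
    (hFil_fin : ∀ i : ι, ∃ p₀ p₁ : ℤ,
      (∀ n : ℤ, S i n ≤ Fil p₀ n) ∧ (∀ n : ℤ, Fil p₁ n ⊓ S i n = ⊥))
    -- the cohomology of the associated graded complex is concentrated in degree 0
    (hgr_vanish : ∀ n : ℤ, n + 1 ≠ 0 → ∀ p : ℤ, ∀ x ∈ Fil p (n + 1),
      d (n + 1) x ∈ Fil (p + 1) (n + 1 + 1) →
      ∃ y ∈ Fil p n, x - d n y ∈ Fil (p + 1) (n + 1)) :
    -- vanishing of `H^m(C)` for `m ≠ 0`
    (∀ n : ℤ, n + 1 ≠ 0 → ∀ x : C (n + 1), d (n + 1) x = 0 → ∃ y : C n, d n y = x) ∧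
    -- surjectivity of `gr H⁰ → H⁰(gr)`
    (∀ n : ℤ, n + 1 = 0 → ∀ p : ℤ, ∀ x ∈ Fil p (n + 1),
      d (n + 1) x ∈ Fil (p + 1) (n + 1 + 1) →
      ∃ x' ∈ Fil p (n + 1), d (n + 1) x' = 0 ∧
        ∃ y ∈ Fil p n, x - x' - d n y ∈ Fil (p + 1) (n + 1)) ∧
    -- injectivity of `gr H⁰ → H⁰(gr)`
    (∀ n : ℤ, n + 1 = 0 → ∀ p : ℤ, ∀ x ∈ Fil p (n + 1), d (n + 1) x = 0 →
      (∃ y ∈ Fil p n, x - d n y ∈ Fil (p + 1) (n + 1)) →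
      ∃ z ∈ Fil (p + 1) (n + 1), d (n + 1) z = 0 ∧ ∃ w : C n, x = z + d n w) := by
  let _ := fun n => (hinternal n).chooseDecomposition
  have hstrict : ∀ n, n + 1 ≠ 0 → ∀ p, ∀ x ∈ Fil p (n + 1), d (n + 1) x = 0 →
      ∃ y ∈ Fil p n, d n y = x := fun n hn p x hx hdx =>
    fil_inf_ker_le_map hdd hmono hS_d
      (fun p n => DirectSum.SetLike.isHomogeneous_of_le_iSup_inf (hFil_S p n).le)
      (fun p x hx hdx => hgr_vanish n hn p x hx (hdx ▸ zero_mem _))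
      (fun i => let ⟨_, p₁, _, hbot⟩ := hFil_fin i; ⟨p₁, hbot (n + 1)⟩) p ⟨hx, hdx⟩
  refine ⟨fun n hn x hdx => ?_, fun n hn p x hx hdx => ?_, ?_⟩
  · obtain ⟨p, hx⟩ := hexh (n + 1) x
    obtain ⟨y, -, hy⟩ := hstrict n hn p x hx hdx
    exact ⟨y, hy⟩
  · obtain ⟨y, hy, hdy⟩ := hstrict (n + 1) (by omega) (p + 1) (d (n + 1) x) hdx (hdd _ x)
    refine ⟨x - y, sub_mem hx (hmono p (p + 1) (n + 1) (by omega) hy),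
      by rw [map_sub, hdy, sub_self], 0, zero_mem _, ?_⟩
    simpa only [map_zero, sub_zero, sub_sub_cancel] using hy
  · rintro n - p x - hdx ⟨y, -, hres⟩
    exact ⟨x - d n y, hres, by rw [map_sub, hdx, hdd, sub_zero], y, by abel⟩

/-- Let `(C•, d)` be a cochain complex of complex vector spaces with an
exhaustive decreasing filtration `Fil^p C•` preserved by `d`, such that the complex splits
as a direct sum of finite-dimensional graded subcomplexes `S i` on each of which the
filtration is finite (and the filtration is compatible with the splitting).  If the
associated graded complex has cohomology concentrated in degree `0`, then
`H^n(C•, d) = 0` for `n ≠ 0`, and the natural map `gr H⁰(C•, d) → H⁰(gr C•, gr d)` is an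
isomorphism (expressed elementwise, avoiding quotient constructions; degree `0` is
written as `n + 1` with `n + 1 = 0`). -/
theorem statement4
    (C : ℤ → Type*) [∀ n, AddCommGroup (C n)] [∀ n, Module ℂ (C n)]
    (d : ∀ n : ℤ, C n →ₗ[ℂ] C (n + 1))
    (hdd : ∀ (n : ℤ) (x : C n), d (n + 1) (d n x) = 0)
    (Fil : ℤ → ∀ n : ℤ, Submodule ℂ (C n))
    (hmono : ∀ p q : ℤ, ∀ n : ℤ, p ≤ q → Fil q n ≤ Fil p n)
    (hexh : ∀ (n : ℤ) (x : C n), ∃ p : ℤ, x ∈ Fil p n)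
    (hd_fil : ∀ (p n : ℤ), ∀ x ∈ Fil p n, d n x ∈ Fil p (n + 1))
    -- the splitting into finite-dimensional graded subcomplexes
    (ι : Type*) [DecidableEq ι] (S : ι → ∀ n : ℤ, Submodule ℂ (C n))
    (hinternal : ∀ n : ℤ, DirectSum.IsInternal fun i : ι => S i n)
    (hS_d : ∀ (i : ι) (n : ℤ), ∀ x ∈ S i n, d n x ∈ S i (n + 1))
    (hS_fd : ∀ (i : ι) (n : ℤ), FiniteDimensional ℂ (S i n))
    (hS_bdd : ∀ i : ι, {n : ℤ | S i n ≠ ⊥}.Finite)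
    (hFil_S : ∀ (p n : ℤ), Fil p n = ⨆ i : ι, (Fil p n ⊓ S i n))
    (hFil_fin : ∀ i : ι, ∃ p₀ p₁ : ℤ,
      (∀ n : ℤ, S i n ≤ Fil p₀ n) ∧ (∀ n : ℤ, Fil p₁ n ⊓ S i n = ⊥))
    -- the cohomology of the associated graded complex is concentrated in degree 0
    (hgr_vanish : ∀ n : ℤ, n + 1 ≠ 0 → ∀ p : ℤ, ∀ x ∈ Fil p (n + 1),
      d (n + 1) x ∈ Fil (p + 1) (n + 1 + 1) →
      ∃ y ∈ Fil p n, x - d n y ∈ Fil (p + 1) (n + 1)) :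
    -- vanishing of `H^m(C)` for `m ≠ 0`
    (∀ n : ℤ, n + 1 ≠ 0 → ∀ x : C (n + 1), d (n + 1) x = 0 → ∃ y : C n, d n y = x) ∧
    -- surjectivity of `gr H⁰ → H⁰(gr)`
    (∀ n : ℤ, n + 1 = 0 → ∀ p : ℤ, ∀ x ∈ Fil p (n + 1),
      d (n + 1) x ∈ Fil (p + 1) (n + 1 + 1) →
      ∃ x' ∈ Fil p (n + 1), d (n + 1) x' = 0 ∧
        ∃ y ∈ Fil p n, x - x' - d n y ∈ Fil (p + 1) (n + 1)) ∧
    -- injectivity of `gr H⁰ → H⁰(gr)`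
    (∀ n : ℤ, n + 1 = 0 → ∀ p : ℤ, ∀ x ∈ Fil p (n + 1), d (n + 1) x = 0 →
      (∃ y ∈ Fil p n, x - d n y ∈ Fil (p + 1) (n + 1)) →
      ∃ z ∈ Fil (p + 1) (n + 1), d (n + 1) z = 0 ∧ ∃ w : C n, x = z + d n w) :=
  statement4_general C d hdd Fil hmono hexh ι S hinternal hS_d hFil_S hFil_fin hgr_vanish
end

section
/- Under the conditions (★) for the pair of good gradings (f₁,H₁), (f₂,H₂): the subspace l₁ := g_{1,2} is isotropic in (g^{(1)}_1, ω₁) and its ω₁-orthogonal is l₁^{⊥,ω₁} = g_{1,1} ⊕ g_{1,2}. -/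
/-!
Each grading of `g` is given by a derivation, which is inner because `g` is semisimple:
`ad h` with `⁅h, x⁆ = δ • x` on `g_δ`. Invariance of `Φ` then gives `(a + b) Φ x y = 0` for
`x ∈ g_a`, `y ∈ g_b`, so `Φ` pairs `g_a` only with `g_{-a}`, for both gradings. As `f₁ ∈ g_{-2,-2}`
by (★), `ω₁ = Φ f₁ ⁅·, ·⁆` pairs `g_{a,b}` with `g_{c,d}` only when `a + c = 2` and `b + d = 2`.
This makes `g_{1,2}` isotropic and `ω₁`-orthogonal to `g_{1,1}`. If `a ∈ g_{1,0}` is orthogonal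
to `g_{1,2}`, then `⁅f₁, a⁆ ∈ g_{-1,-2}` is `Φ`-orthogonal to `g_{1,0} ⊕ g_{1,1} ⊕ g_{1,2} = g_1`
and hence to all of `g`, so `⁅f₁, a⁆ = 0` and `a = 0` since `ad f₁` is injective on `g_1`.
-/

open DirectSum

namespace LieAlgebra

section GradingDerivation

variable {R L : Type*} [CommRing R] [LieRing L] [LieAlgebra R L]
  (gr : ℤ → Submodule R L) (hgr : IsInternal gr)

def IsLieGrading : Prop :=
  ∀ a b : ℤ, ∀ x ∈ gr a, ∀ y ∈ gr b, ⁅x, y⁆ ∈ gr (a + b)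

noncomputable def gradingEnd : L →ₗ[R] L :=
  DirectSum.toModule R ℤ L (fun δ => (δ : R) • (gr δ).subtype) ∘ₗ
    (LinearEquiv.ofBijective (coeLinearMap gr) hgr).symm.toLinearMap

theorem gradingEnd_apply_of_mem {δ : ℤ} {x : L} (hx : x ∈ gr δ) :
    gradingEnd gr hgr x = (δ : R) • x := by
  have hsymm : (LinearEquiv.ofBijective (coeLinearMap gr) hgr).symm x =
      lof R ℤ (fun i => gr i) δ ⟨x, hx⟩ := by
    rw [LinearEquiv.symm_apply_eq]
    exact (coeLinearMap_of gr δ ⟨x, hx⟩).symm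
  rw [gradingEnd, LinearMap.comp_apply, LinearEquiv.coe_toLinearMap, hsymm, toModule_lof]
  rfl

theorem gradingEnd_lie (hbr : IsLieGrading gr) (x y : L) :
    gradingEnd gr hgr ⁅x, y⁆ = ⁅gradingEnd gr hgr x, y⁆ + ⁅x, gradingEnd gr hgr y⁆ := by
  have hmem (z : L) : z ∈ ⨆ δ, gr δ := hgr.submodule_iSup_eq_top ▸ Submodule.mem_top
  refine Submodule.iSup_induction gr (motive := fun x => ∀ y, gradingEnd gr hgr ⁅x, y⁆ =
    ⁅gradingEnd gr hgr x, y⁆ + ⁅x, gradingEnd gr hgr y⁆) (hmem x) ?_ (by simp) ?_ y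
  · intro a x hx y
    refine Submodule.iSup_induction gr (motive := fun y => gradingEnd gr hgr ⁅x, y⁆ =
      ⁅gradingEnd gr hgr x, y⁆ + ⁅x, gradingEnd gr hgr y⁆) (hmem y) ?_ (by simp) ?_
    · intro b y hy
      rw [gradingEnd_apply_of_mem gr hgr (hbr a b x hx y hy), gradingEnd_apply_of_mem gr hgr hx,
        gradingEnd_apply_of_mem gr hgr hy, Int.cast_add, add_smul, smul_lie, lie_smul]
    · intro y₁ y₂ h₁ h₂
      simp only [lie_add, map_add, h₁, h₂]
      abel
  · intro x₁ x₂ h₁ h₂ y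
    simp only [add_lie, map_add, h₁, h₂]
    abel

noncomputable def gradingDerivation (hbr : IsLieGrading gr) : LieDerivation R L L where
  toLinearMap := gradingEnd gr hgr
  leibniz' x y := by
    rw [gradingEnd_lie gr hgr hbr, ← lie_skew y]
    abel

end GradingDerivation

theorem apply_eq_zero_of_lie_eq_smul {K L : Type*} [Field K] [LieRing L] [LieAlgebra K L]
    (Φ : L →ₗ[K] L →ₗ[K] K) (hinv : ∀ x y z : L, Φ ⁅x, y⁆ z = Φ x ⁅y, z⁆)
    {h x y : L} {α β : K} (hx : ⁅h, x⁆ = α • x) (hy : ⁅h, y⁆ = β • y) (hαβ : α + β ≠ 0) :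
    Φ x y = 0 := by
  have hsum : (α + β) * Φ x y = 0 := by
    calc (α + β) * Φ x y = Φ ⁅h, x⁆ y + Φ x ⁅h, y⁆ := by simp [hx, hy, add_mul]
      _ = 0 := by rw [← hinv, ← lie_skew, map_neg, LinearMap.neg_apply, neg_add_cancel]
  exact (mul_eq_zero.mp hsum).resolve_left hαβ

section KillingGrading

variable {K L : Type*} [Field K] [LieRing L] [LieAlgebra K L] [Module.Finite K L]
  [LieAlgebra.IsKilling K L] (gr : ℤ → Submodule K L)

theorem exists_lie_eq_smul_of_mem_grading (hgr : IsInternal gr) (hbr : IsLieGrading gr) :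
    ∃ h : L, ∀ δ : ℤ, ∀ x ∈ gr δ, ⁅h, x⁆ = (δ : K) • x := by
  obtain ⟨h, hh⟩ := LieDerivation.IsKilling.exists_eq_ad (gradingDerivation gr hgr hbr)
  refine ⟨h, fun δ x hx => ?_⟩
  rw [← gradingEnd_apply_of_mem gr hgr hx, ← LieDerivation.ad_apply_apply K, hh]
  rfl

variable [CharZero K]

theorem apply_eq_zero_of_mem_of_add_ne_zero (hgr : IsInternal gr)
    (hbr : IsLieGrading gr) (Φ : L →ₗ[K] L →ₗ[K] K)
    (hinv : ∀ x y z : L, Φ ⁅x, y⁆ z = Φ x ⁅y, z⁆) {a b : ℤ} (hab : a + b ≠ 0) {x y : L}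
    (hx : x ∈ gr a) (hy : y ∈ gr b) : Φ x y = 0 := by
  obtain ⟨h, hh⟩ := exists_lie_eq_smul_of_mem_grading gr hgr hbr
  exact apply_eq_zero_of_lie_eq_smul Φ hinv (hh a x hx) (hh b y hy) (by exact_mod_cast hab)

theorem apply_lie_eq_zero_of_mem_of_add_ne_zero (hgr : IsInternal gr)
    (hbr : IsLieGrading gr) (Φ : L →ₗ[K] L →ₗ[K] K)
    (hinv : ∀ x y z : L, Φ ⁅x, y⁆ z = Φ x ⁅y, z⁆) {a b c : ℤ} (habc : a + (b + c) ≠ 0) {f u v : L}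
    (hf : f ∈ gr a) (hu : u ∈ gr b) (hv : v ∈ gr c) : Φ f ⁅u, v⁆ = 0 :=
  apply_eq_zero_of_mem_of_add_ne_zero gr hgr hbr Φ hinv habc hf (hbr b c u hu v hv)

theorem eq_zero_of_mem_of_forall_mem_apply_eq_zero (hgr : IsInternal gr)
    (hbr : IsLieGrading gr) (Φ : L →ₗ[K] L →ₗ[K] K)
    (hinv : ∀ x y z : L, Φ ⁅x, y⁆ z = Φ x ⁅y, z⁆) (hnondeg : ∀ x : L, (∀ y : L, Φ x y = 0) → x = 0)
    {p q : ℤ} (hpq : p + q = 0) {w : L} (hw : w ∈ gr p) (h : ∀ y ∈ gr q, Φ w y = 0) : w = 0 := by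
  refine hnondeg w fun y => ?_
  have hy : y ∈ ⨆ δ, gr δ := hgr.submodule_iSup_eq_top ▸ Submodule.mem_top
  refine Submodule.iSup_induction gr (motive := fun y => Φ w y = 0) hy (fun r y hy => ?_)
    (map_zero _) (fun y₁ y₂ h₁ h₂ => by rw [map_add, h₁, h₂, add_zero])
  rcases eq_or_ne r q with rfl | hr
  · exact h y hy
  · exact apply_eq_zero_of_mem_of_add_ne_zero gr hgr hbr Φ hinv (by omega) hw hy

end KillingGrading

theorem eq_zero_of_mem_of_forall_apply_lie_eq_zero {K L : Type*} [Field K] [CharZero K]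
    [LieRing L] [LieAlgebra K L] [Module.Finite K L] [LieAlgebra.IsKilling K L]
    (gr1 gr2 : ℤ → Submodule K L) (hdec1 : IsInternal gr1) (hdec2 : IsInternal gr2)
    (hbr1 : IsLieGrading gr1) (hbr2 : IsLieGrading gr2) (Φ : L →ₗ[K] L →ₗ[K] K)
    (hinv : ∀ x y z : L, Φ ⁅x, y⁆ z = Φ x ⁅y, z⁆) (hnondeg : ∀ x : L, (∀ y : L, Φ x y = 0) → x = 0)
    {f : L} (hf1 : f ∈ gr1 (-2)) (hf2 : f ∈ gr2 (-2))
    (hinj : ∀ x ∈ gr1 1, ⁅f, x⁆ = 0 → x = 0)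
    (hsplit : gr1 1 ≤ (gr1 1 ⊓ gr2 0) ⊔ (gr1 1 ⊓ gr2 1) ⊔ (gr1 1 ⊓ gr2 2))
    {a : L} (ha : a ∈ gr1 1 ⊓ gr2 0) (hω : ∀ u ∈ gr1 1 ⊓ gr2 2, Φ f ⁅a, u⁆ = 0) : a = 0 := by
  refine hinj a ha.1 (eq_zero_of_mem_of_forall_mem_apply_eq_zero gr1 hdec1 hbr1 Φ hinv hnondeg
    (show -2 + 1 + 1 = (0 : ℤ) by norm_num) (hbr1 _ _ f hf1 a ha.1) fun y hy => ?_)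
  have hfa : ⁅f, a⁆ ∈ gr2 (-2 + 0) := hbr2 _ _ f hf2 a ha.2
  obtain ⟨y', hy', y₂, hy₂, rfl⟩ := Submodule.mem_sup.mp (hsplit hy)
  obtain ⟨y₀, hy₀, y₁, hy₁, rfl⟩ := Submodule.mem_sup.mp hy'
  have h₀ := apply_eq_zero_of_mem_of_add_ne_zero gr2 hdec2 hbr2 Φ hinv (by norm_num) hfa hy₀.2
  have h₁ := apply_eq_zero_of_mem_of_add_ne_zero gr2 hdec2 hbr2 Φ hinv (by norm_num) hfa hy₁.2
  rw [map_add, map_add, h₀, h₁, hinv, hω y₂ hy₂, add_zero, add_zero]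

end LieAlgebra

theorem statement8_general
    (g : Type*) [LieRing g] [LieAlgebra ℂ g] [FiniteDimensional ℂ g]
    [LieAlgebra.IsSimple ℂ g]
    (Φ : g →ₗ[ℂ] g →ₗ[ℂ] ℂ)
    (hinv : ∀ x y z : g, Φ ⁅x, y⁆ z = Φ x ⁅y, z⁆)
    (hnondeg : ∀ x : g, (∀ y : g, Φ x y = 0) → x = 0)
    (gr1 gr2 : ℤ → Submodule ℂ g)
    (hdec1 : DirectSum.IsInternal fun δ : ℤ => gr1 δ)
    (hdec2 : DirectSum.IsInternal fun δ : ℤ => gr2 δ)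
    (hbr1 : ∀ δ₁ δ₂ : ℤ, ∀ x ∈ gr1 δ₁, ∀ y ∈ gr1 δ₂, ⁅x, y⁆ ∈ gr1 (δ₁ + δ₂))
    (hbr2 : ∀ δ₁ δ₂ : ℤ, ∀ x ∈ gr2 δ₁, ∀ y ∈ gr2 δ₂, ⁅x, y⁆ ∈ gr2 (δ₁ + δ₂))
    (f1 f2 : g) (hf1 : f1 ∈ gr1 (-2)) (hf2 : f2 ∈ gr2 (-2))
    (hgood1inj : ∀ δ : ℤ, 1 ≤ δ → ∀ x ∈ gr1 δ, ⁅f1, x⁆ = 0 → x = 0)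
    (hstar3 : gr1 1 ≤ (gr1 1 ⊓ gr2 0) ⊔ (gr1 1 ⊓ gr2 1) ⊔ (gr1 1 ⊓ gr2 2))
    (hstar5 : f2 - f1 ∈ gr1 0 ⊓ gr2 (-2))
    :
    (∀ u ∈ gr1 1 ⊓ gr2 2, ∀ v ∈ gr1 1 ⊓ gr2 2, Φ f1 ⁅u, v⁆ = 0) ∧
    ({v : g | v ∈ gr1 1 ∧ ∀ u ∈ gr1 1 ⊓ gr2 2, Φ f1 ⁅v, u⁆ = 0}
      = ↑((gr1 1 ⊓ gr2 1) ⊔ (gr1 1 ⊓ gr2 2))) := by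
  -- `LieAlgebra.IsKilling ℂ g` is inferred from simplicity (Cartan's criterion).
  have hf : f1 ∈ gr2 (-2) := by simpa using sub_mem hf2 hstar5.2
  have hω {b : ℤ} (hb : b ≠ 0) {u v : g} (hu : u ∈ gr2 b) (hv : v ∈ gr2 2) : Φ f1 ⁅u, v⁆ = 0 :=
    LieAlgebra.apply_lie_eq_zero_of_mem_of_add_ne_zero gr2 hdec2 hbr2 Φ hinv (by omega) hf hu hv
  refine ⟨fun u hu v hv => hω two_ne_zero hu.2 hv.2, Set.ext fun v => ⟨?_, ?_⟩⟩
  · rintro ⟨hv, hvω⟩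
    obtain ⟨a', ha', c, hc, rfl⟩ := Submodule.mem_sup.mp (hstar3 hv)
    obtain ⟨a, ha, b, hb, rfl⟩ := Submodule.mem_sup.mp ha'
    have ha0 : a = 0 := by
      refine LieAlgebra.eq_zero_of_mem_of_forall_apply_lie_eq_zero gr1 gr2 hdec1 hdec2 hbr1 hbr2
        Φ hinv hnondeg hf1 hf (hgood1inj 1 le_rfl) hstar3 ha fun u hu => ?_
      simpa only [add_lie, map_add, hω one_ne_zero hb.2 hu.2, hω two_ne_zero hc.2 hu.2,
        add_zero] using hvω u hu
    rw [ha0, zero_add]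
    exact Submodule.add_mem_sup hb hc
  · intro hv
    obtain ⟨b, hb, c, hc, rfl⟩ := Submodule.mem_sup.mp hv
    refine ⟨add_mem hb.1 hc.1, fun u hu => ?_⟩
    rw [add_lie, map_add, hω one_ne_zero hb.2 hu.2, hω two_ne_zero hc.2 hu.2, add_zero]

/-- Under the conditions (★) for the pair of good gradings
`(f₁, H₁)`, `(f₂, H₂)`: the subspace `l₁ := g_{1,2}` is isotropic in `(g^{(1)}₁, ω₁)`
and its `ω₁`-orthogonal inside `g^{(1)}₁` is `l₁^{⊥,ω₁} = g_{1,1} ⊕ g_{1,2}`. -/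
theorem statement8
    (g : Type*) [LieRing g] [LieAlgebra ℂ g] [FiniteDimensional ℂ g]
    [LieAlgebra.IsSimple ℂ g]
    (Φ : g →ₗ[ℂ] g →ₗ[ℂ] ℂ)
    (hsymm : ∀ x y : g, Φ x y = Φ y x)
    (hinv : ∀ x y z : g, Φ ⁅x, y⁆ z = Φ x ⁅y, z⁆)
    (hnondeg : ∀ x : g, (∀ y : g, Φ x y = 0) → x = 0)
    (gr1 gr2 : ℤ → Submodule ℂ g)
    (hdec1 : DirectSum.IsInternal fun δ : ℤ => gr1 δ)
    (hdec2 : DirectSum.IsInternal fun δ : ℤ => gr2 δ)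
    (hbidec : DirectSum.IsInternal fun p : ℤ × ℤ => gr1 p.1 ⊓ gr2 p.2)
    (hbr1 : ∀ δ₁ δ₂ : ℤ, ∀ x ∈ gr1 δ₁, ∀ y ∈ gr1 δ₂, ⁅x, y⁆ ∈ gr1 (δ₁ + δ₂))
    (hbr2 : ∀ δ₁ δ₂ : ℤ, ∀ x ∈ gr2 δ₁, ∀ y ∈ gr2 δ₂, ⁅x, y⁆ ∈ gr2 (δ₁ + δ₂))
    (f1 f2 : g) (hf1 : f1 ∈ gr1 (-2)) (hf2 : f2 ∈ gr2 (-2))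
    (hgood1inj : ∀ δ : ℤ, 1 ≤ δ → ∀ x ∈ gr1 δ, ⁅f1, x⁆ = 0 → x = 0)
    (hgood1surj : ∀ δ : ℤ, δ ≤ 1 → ∀ y ∈ gr1 (δ - 2), ∃ x ∈ gr1 δ, ⁅f1, x⁆ = y)
    (hgood2inj : ∀ δ : ℤ, 1 ≤ δ → ∀ x ∈ gr2 δ, ⁅f2, x⁆ = 0 → x = 0)
    (hgood2surj : ∀ δ : ℤ, δ ≤ 1 → ∀ y ∈ gr2 (δ - 2), ∃ x ∈ gr2 δ, ⁅f2, x⁆ = y)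
    (hstar1 : (⨆ d : ℤ, ⨆ _ : (2 : ℤ) ≤ d, gr1 d) ≤ ⨆ d : ℤ, ⨆ _ : (1 : ℤ) ≤ d, gr2 d)
    (hstar2 : (⨆ d : ℤ, ⨆ _ : (1 : ℤ) ≤ d, gr2 d) ≤ ⨆ d : ℤ, ⨆ _ : (0 : ℤ) ≤ d, gr1 d)
    (hstar3 : gr1 1 ≤ (gr1 1 ⊓ gr2 0) ⊔ (gr1 1 ⊓ gr2 1) ⊔ (gr1 1 ⊓ gr2 2))
    (hstar4 : gr2 1 ≤ (gr2 1 ⊓ gr1 0) ⊔ (gr2 1 ⊓ gr1 1) ⊔ (gr2 1 ⊓ gr1 2))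
    (hstar5 : f2 - f1 ∈ gr1 0 ⊓ gr2 (-2))
    :
    (∀ u ∈ gr1 1 ⊓ gr2 2, ∀ v ∈ gr1 1 ⊓ gr2 2, Φ f1 ⁅u, v⁆ = 0) ∧
    ({v : g | v ∈ gr1 1 ∧ ∀ u ∈ gr1 1 ⊓ gr2 2, Φ f1 ⁅v, u⁆ = 0}
      = ↑((gr1 1 ⊓ gr2 1) ⊔ (gr1 1 ⊓ gr2 2))) :=
  statement8_general g Φ hinv hnondeg gr1 gr2 hdec1 hdec2 hbr1 hbr2 f1 f2 hf1 hf2 hgood1inj hstar3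
    hstar5
end

section
/- Under the conditions (★), set ñ₁ := g^{(1)}_{≥1} and ñ₂ := g^{(1)}_{≥1} ⊕ n₀ where n₀ = a ⊕ (g^{(1)}_0 ∩ g^{(2)}_{≥2}). Then [ñ₂, ñ₂] ⊆ n₂; in particular ñ₂ is a Lie subalgebra of g with ñ₂ = ñ₁ ⊕ n₀ and [ñ₁, n₀] ⊆ ñ₁. -/
/-!
The two gradings refine to the bigrading `g = ⨁ g_{d,e}`, `g_{d,e} = g^{(1)}_d ∩ g^{(2)}_e`, and (★)
kills every piece outside the bidegrees with `d ≥ 2 → e ≥ 1`, `d = 1 → 0 ≤ e ≤ 2` and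
`e = 1 → 0 ≤ d ≤ 2`. Independence of the bigraded pieces turns `g^{(1)}_0 ∩ g^{(2)}_{≥2}` into the
sum of the `g_{0,e}` with `e ≥ 2`, so `ñ₂` is the sum of the surviving pieces with `d ≥ 1`, or with
`d = 0` and `e ≥ 1`. Brackets add bidegrees, and a surviving sum of two such bidegrees has
`d, e ≥ 1` or `d = 0, e ≥ 2`: these pieces lie in `n₂` (using `g_{d,1} = 0` for `d ≥ 3`) and in
`ñ₂`. The remaining two claims only use `n₀ ⊆ g^{(1)}_0`.
-/

open Set

section Lattice

variable {α ι κ : Type*} [CompleteLattice α]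

theorem biSup_le_biSup_inter {f : ι → α} {s t : Set ι} (h : ∀ i ∉ t, f i = ⊥) :
    ⨆ i ∈ s, f i ≤ ⨆ i ∈ s ∩ t, f i := by
  refine iSup₂_le fun i hi => ?_
  by_cases hit : i ∈ t
  · exact le_biSup f ⟨hi, hit⟩
  · rw [h i hit]; exact bot_le

theorem le_biSup_Icc_of_le_sup_inf {f : ℤ → α} {a : α} (h : a ≤ a ⊓ f 0 ⊔ a ⊓ f 1 ⊔ a ⊓ f 2) :
    a ≤ ⨆ e ∈ Icc (0 : ℤ) 2, f e := by
  refine h.trans (sup_le (sup_le ?_ ?_) ?_) <;>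
    exact inf_le_right.trans (le_biSup f (by norm_num))

variable [IsModularLattice α] [IsCompactlyGenerated α]

theorem iSupIndep.biSup_inf_biSup {f : ι → α} (hf : iSupIndep f) (s t : Set ι) :
    (⨆ i ∈ s, f i) ⊓ (⨆ i ∈ t, f i) = ⨆ i ∈ s ∩ t, f i := by
  refine le_antisymm (le_of_eq ?_)
    (le_inf (biSup_mono inter_subset_left) (biSup_mono inter_subset_right))
  calc (⨆ i ∈ s, f i) ⊓ (⨆ i ∈ t, f i)
      = ((⨆ i ∈ s ∩ t, f i) ⊔ ⨆ i ∈ s \ t, f i) ⊓ ⨆ i ∈ t, f i := by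
        rw [← iSup_union, inter_union_sdiff]
    _ = (⨆ i ∈ s ∩ t, f i) ⊔ (⨆ i ∈ s \ t, f i) ⊓ ⨆ i ∈ t, f i :=
        sup_inf_assoc_of_le _ (biSup_mono inter_subset_right)
    _ = ⨆ i ∈ s ∩ t, f i := by
        rw [(hf.disjoint_biSup_biSup disjoint_sdiff_left).eq_bot, sup_bot_eq]

theorem iSupIndep.biSup_eq_biSup_preimage {f : ι → α} {g : κ → α} {π : κ → ι}
    (hf : iSupIndep f) (hg : ⨆ k, g k = ⊤) (hgf : ∀ k, g k ≤ f (π k)) (s : Set ι) :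
    ⨆ i ∈ s, f i = ⨆ k ∈ π ⁻¹' s, g k := by
  have hle : ∀ t : Set ι, ⨆ k ∈ π ⁻¹' t, g k ≤ ⨆ i ∈ t, f i := fun t =>
    iSup₂_le fun k hk => (hgf k).trans (le_biSup f hk)
  have hcover : (⨆ k ∈ π ⁻¹' s, g k) ⊔ ⨆ k ∈ π ⁻¹' sᶜ, g k = ⊤ := by
    rw [← iSup_union, preimage_compl, union_compl_self, iSup_univ, hg]
  refine le_antisymm (le_of_eq ?_) (hle s)
  calc ⨆ i ∈ s, f i
      = ((⨆ k ∈ π ⁻¹' s, g k) ⊔ ⨆ k ∈ π ⁻¹' sᶜ, g k) ⊓ ⨆ i ∈ s, f i := by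
        rw [hcover, top_inf_eq]
    _ = (⨆ k ∈ π ⁻¹' s, g k) ⊔ (⨆ k ∈ π ⁻¹' sᶜ, g k) ⊓ ⨆ i ∈ s, f i :=
        sup_inf_assoc_of_le _ (hle s)
    _ = ⨆ k ∈ π ⁻¹' s, g k := by
        rw [((hf.disjoint_biSup_biSup disjoint_compl_left).mono_left (hle sᶜ)).eq_bot,
          sup_bot_eq]

end Lattice

section Graded

variable {R L ι : Type*} [CommRing R] [LieRing L] [LieAlgebra R L]

theorem lie_mem_of_mem_biSup [Add ι]
    {C : ι → Submodule R L} (hC : ∀ i j, ∀ x ∈ C i, ∀ y ∈ C j, ⁅x, y⁆ ∈ C (i + j))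
    {s t : Set ι} {N : Submodule R L} (hN : ∀ i ∈ s, ∀ j ∈ t, C (i + j) ≤ N) {x y : L}
    (hx : x ∈ ⨆ i ∈ s, C i) (hy : y ∈ ⨆ j ∈ t, C j) : ⁅x, y⁆ ∈ N := by
  rw [iSup_subtype'] at hx hy
  induction hx using Submodule.iSup_induction' with
  | mem i x hx =>
    induction hy using Submodule.iSup_induction' with
    | mem j y hy => exact hN i i.2 j j.2 (hC i j x hx y hy)
    | zero => rw [lie_zero]; exact N.zero_mem
    | add y y' _ _ hy hy' => rw [lie_add]; exact N.add_mem hy hy'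
  | zero => rw [zero_lie]; exact N.zero_mem
  | add x x' _ _ hx hx' => rw [add_lie]; exact N.add_mem hx hx'

theorem lie_mem_biSup_Ici_of_mem_zero {gr : ℤ → Submodule R L}
    (hgr : ∀ i j, ∀ x ∈ gr i, ∀ y ∈ gr j, ⁅x, y⁆ ∈ gr (i + j)) (k : ℤ) {x y : L}
    (hx : x ∈ ⨆ d ∈ Ici k, gr d) (hy : y ∈ gr 0) : ⁅x, y⁆ ∈ ⨆ d ∈ Ici k, gr d := by
  refine lie_mem_of_mem_biSup hgr (fun d hd e he => ?_) hx (le_biSup gr (mem_singleton 0) hy)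
  rw [mem_singleton_iff.mp he, add_zero]
  exact le_biSup gr hd

end Graded

section Bidegrees

variable {α : Type*} [CompleteLattice α] {gr1 gr2 : ℤ → α}

def starBidegrees : Set (ℤ × ℤ) :=
  {p | (2 ≤ p.1 → 1 ≤ p.2) ∧ (p.1 = 1 → p.2 ∈ Icc 0 2) ∧ (p.2 = 1 → p.1 ∈ Icc 0 2)}

def nt2Bidegrees : Set (ℤ × ℤ) :=
  {p | 1 ≤ p.1 ∨ p.1 = 0 ∧ 1 ≤ p.2}

theorem inf_eq_bot_of_not_mem_starBidegrees
    (h1 : iSupIndep gr1) (h2 : iSupIndep gr2)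
    (hstar1 : ⨆ d ∈ Ici 2, gr1 d ≤ ⨆ e ∈ Ici 1, gr2 e)
    (hstar3 : gr1 1 ≤ ⨆ e ∈ Icc 0 2, gr2 e) (hstar4 : gr2 1 ≤ ⨆ d ∈ Icc 0 2, gr1 d)
    {p : ℤ × ℤ} (hp : p ∉ starBidegrees) : gr1 p.1 ⊓ gr2 p.2 = ⊥ := by
  obtain ⟨d, e⟩ := p
  simp only [starBidegrees, mem_ofPred_eq, not_and_or, Classical.not_imp] at hp
  rcases hp with ⟨hd, he⟩ | ⟨rfl, he⟩ | ⟨rfl, hd⟩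
  · rw [inf_comm]
    exact ((h2.disjoint_biSup (show e ∉ Ici 1 by simpa using he)).mono_right
      ((le_biSup gr1 (show d ∈ Ici 2 from hd)).trans hstar1)).eq_bot
  · rw [inf_comm]
    exact ((h2.disjoint_biSup he).mono_right hstar3).eq_bot
  · exact ((h1.disjoint_biSup hd).mono_right hstar4).eq_bot

theorem add_mem_of_mem_nt2Bidegrees {p q : ℤ × ℤ}
    (hp : p ∈ nt2Bidegrees ∩ starBidegrees) (hq : q ∈ nt2Bidegrees ∩ starBidegrees)
    (hpq : p + q ∈ starBidegrees) :
    1 ≤ (p + q).1 ∧ 1 ≤ (p + q).2 ∨ (p + q).1 = 0 ∧ 2 ≤ (p + q).2 := by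
  obtain ⟨a, b⟩ := p
  obtain ⟨c, d⟩ := q
  simp only [nt2Bidegrees, starBidegrees, mem_inter_iff, mem_ofPred_eq, mem_Icc,
    Prod.fst_add, Prod.snd_add] at hp hq hpq ⊢
  omega

theorem bigraded_le_n2 (a : α) {p : ℤ × ℤ} (hp : p ∈ starBidegrees)
    (hpos : 1 ≤ p.1 ∧ 1 ≤ p.2 ∨ p.1 = 0 ∧ 2 ≤ p.2) :
    gr1 p.1 ⊓ gr2 p.2 ≤ (a ⊔ gr1 1 ⊓ gr2 1 ⊔ gr1 2 ⊓ gr2 1) ⊔ ⨆ e ∈ Ici 2, gr2 e := by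
  obtain ⟨d, e⟩ := p
  rcases le_or_gt 2 e with he | he
  · exact inf_le_right.trans ((le_biSup gr2 (show e ∈ Ici 2 from he)).trans le_sup_right)
  · have he1 : e = 1 := by omega
    subst he1
    obtain rfl | rfl : d = 1 ∨ d = 2 := by
      have := hp.2.2 rfl
      simp only [mem_Icc] at this
      omega
    · exact le_sup_left.trans' (le_sup_left.trans' le_sup_right)
    · exact le_sup_left.trans' le_sup_right

theorem bigraded_le_nt2 (a : α) {p : ℤ × ℤ}
    (hpos : 1 ≤ p.1 ∧ 1 ≤ p.2 ∨ p.1 = 0 ∧ 2 ≤ p.2) :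
    gr1 p.1 ⊓ gr2 p.2 ≤ (⨆ d ∈ Ici 1, gr1 d) ⊔ (a ⊔ gr1 0 ⊓ ⨆ e ∈ Ici 2, gr2 e) := by
  obtain ⟨d, e⟩ := p
  rcases hpos with ⟨hd, -⟩ | ⟨rfl, he⟩
  · exact inf_le_left.trans ((le_biSup gr1 (show d ∈ Ici 1 from hd)).trans le_sup_left)
  · exact (inf_le_inf_left _ (le_biSup gr2 (show e ∈ Ici 2 from he))).trans
      (le_sup_right.trans le_sup_right)

theorem le_biSup_nt2Bidegrees [IsModularLattice α] [IsCompactlyGenerated α]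
    (h1 : iSupIndep gr1) (h2 : iSupIndep gr2)
    (hindep : iSupIndep fun p : ℤ × ℤ => gr1 p.1 ⊓ gr2 p.2)
    (htop : ⨆ p : ℤ × ℤ, gr1 p.1 ⊓ gr2 p.2 = ⊤) {a : α} (ha : a ≤ gr1 0 ⊓ gr2 1) :
    (⨆ d ∈ Ici 1, gr1 d) ⊔ (a ⊔ gr1 0 ⊓ ⨆ e ∈ Ici 2, gr2 e) ≤
      ⨆ p ∈ nt2Bidegrees, gr1 p.1 ⊓ gr2 p.2 := by
  have hfst := h1.biSup_eq_biSup_preimage htop (π := Prod.fst) fun _ => inf_le_left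
  have hsnd := h2.biSup_eq_biSup_preimage htop (π := Prod.snd) fun _ => inf_le_right
  refine sup_le ?_ (sup_le ?_ ?_)
  · rw [hfst]
    exact biSup_mono fun p hp => Or.inl hp
  · exact ha.trans (le_biSup (fun p : ℤ × ℤ => gr1 p.1 ⊓ gr2 p.2)
      (show ((0 : ℤ), (1 : ℤ)) ∈ nt2Bidegrees from Or.inr ⟨rfl, le_rfl⟩))
  · calc gr1 0 ⊓ ⨆ e ∈ Ici 2, gr2 e
        ≤ (⨆ d ∈ ({0} : Set ℤ), gr1 d) ⊓ ⨆ e ∈ Ici 2, gr2 e :=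
          inf_le_inf_right _ (le_biSup gr1 rfl)
      _ = ⨆ p ∈ Prod.fst ⁻¹' {0} ∩ Prod.snd ⁻¹' Ici 2, gr1 p.1 ⊓ gr2 p.2 := by
          rw [hfst, hsnd, hindep.biSup_inf_biSup]
      _ ≤ ⨆ p ∈ nt2Bidegrees, gr1 p.1 ⊓ gr2 p.2 :=
          biSup_mono fun p ⟨hp1, hp2⟩ => Or.inr ⟨hp1, le_trans (by norm_num) hp2⟩

end Bidegrees

theorem statement11_general
    (g : Type*) [LieRing g] [LieAlgebra ℂ g]
    (gr1 gr2 : ℤ → Submodule ℂ g)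
    (hdec1 : DirectSum.IsInternal fun δ : ℤ => gr1 δ)
    (hdec2 : DirectSum.IsInternal fun δ : ℤ => gr2 δ)
    (hbidec : DirectSum.IsInternal fun p : ℤ × ℤ => gr1 p.1 ⊓ gr2 p.2)
    (hbr1 : ∀ δ₁ δ₂ : ℤ, ∀ x ∈ gr1 δ₁, ∀ y ∈ gr1 δ₂, ⁅x, y⁆ ∈ gr1 (δ₁ + δ₂))
    (hbr2 : ∀ δ₁ δ₂ : ℤ, ∀ x ∈ gr2 δ₁, ∀ y ∈ gr2 δ₂, ⁅x, y⁆ ∈ gr2 (δ₁ + δ₂))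
    (f1 : g)
    (hstar1 : (⨆ d : ℤ, ⨆ _ : (2 : ℤ) ≤ d, gr1 d) ≤ ⨆ d : ℤ, ⨆ _ : (1 : ℤ) ≤ d, gr2 d)
    (hstar3 : gr1 1 ≤ (gr1 1 ⊓ gr2 0) ⊔ (gr1 1 ⊓ gr2 1) ⊔ (gr1 1 ⊓ gr2 2))
    (hstar4 : gr2 1 ≤ (gr2 1 ⊓ gr1 0) ⊔ (gr2 1 ⊓ gr1 1) ⊔ (gr2 1 ⊓ gr1 2))
    (aa : Submodule ℂ g)
    (ha1 : aa ≤ (gr2 1 ⊓ gr1 0) ⊓ LinearMap.ker (LieAlgebra.ad ℂ g f1 : g →ₗ[ℂ] g))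
    (n0 n2 : Submodule ℂ g)
    (hn0 : n0 = aa ⊔ (gr1 0 ⊓ (⨆ d : ℤ, ⨆ _ : (2 : ℤ) ≤ d, gr2 d)))
    (hn2 : n2 = (aa ⊔ (gr1 1 ⊓ gr2 1) ⊔ (gr1 2 ⊓ gr2 1)) ⊔ (⨆ d : ℤ, ⨆ _ : (2 : ℤ) ≤ d, gr2 d))
    (nt1 nt2 : Submodule ℂ g)
    (hnt1 : nt1 = ⨆ d : ℤ, ⨆ _ : (1 : ℤ) ≤ d, gr1 d)
    (hnt2 : nt2 = nt1 ⊔ n0)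
    :
    -- `[ñ₂, ñ₂] ⊆ n₂`
    (∀ x ∈ nt2, ∀ y ∈ nt2, ⁅x, y⁆ ∈ n2) ∧
    -- `ñ₂` is a Lie subalgebra
    (∀ x ∈ nt2, ∀ y ∈ nt2, ⁅x, y⁆ ∈ nt2) ∧
    -- `ñ₂ = ñ₁ ⊕ n₀`
    nt1 ⊓ n0 = ⊥ ∧
    -- `[ñ₁, n₀] ⊆ ñ₁`
    (∀ x ∈ nt1, ∀ y ∈ n0, ⁅x, y⁆ ∈ nt1) := by
  have hind1 := hdec1.submodule_iSupIndep
  have hind2 := hdec2.submodule_iSupIndep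
  have hvanish : ∀ p ∉ starBidegrees, gr1 p.1 ⊓ gr2 p.2 = ⊥ := fun p =>
    inf_eq_bot_of_not_mem_starBidegrees hind1 hind2 hstar1
      (le_biSup_Icc_of_le_sup_inf hstar3) (le_biSup_Icc_of_le_sup_inf hstar4)
  have haa : aa ≤ gr1 0 ⊓ gr2 1 := ha1.trans (inf_le_left.trans (inf_comm _ _).le)
  have hn0_le : n0 ≤ gr1 0 := hn0 ▸ sup_le (haa.trans inf_le_left) inf_le_left
  have hcover : nt2 ≤ ⨆ p ∈ nt2Bidegrees ∩ starBidegrees, gr1 p.1 ⊓ gr2 p.2 := by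
    rw [hnt2, hnt1, hn0]
    exact (le_biSup_nt2Bidegrees hind1 hind2 hbidec.submodule_iSupIndep
      hbidec.submodule_iSup_eq_top haa).trans (biSup_le_biSup_inter hvanish)
  have hbracket : ∀ x ∈ nt2, ∀ y ∈ nt2, ⁅x, y⁆ ∈ n2 ⊓ nt2 := by
    intro x hx y hy
    refine lie_mem_of_mem_biSup (C := fun p : ℤ × ℤ => gr1 p.1 ⊓ gr2 p.2)
      (fun p q x hx y hy => ⟨hbr1 _ _ x hx.1 y hy.1, hbr2 _ _ x hx.2 y hy.2⟩)
      (fun p hp q hq => ?_) (hcover hx) (hcover hy)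
    by_cases hpq : p + q ∈ starBidegrees
    · have hpos := add_mem_of_mem_nt2Bidegrees hp hq hpq
      rw [hn2, hnt2, hnt1, hn0]
      exact le_inf (bigraded_le_n2 aa hpq hpos) (bigraded_le_nt2 aa hpos)
    · exact (hvanish _ hpq).trans_le bot_le
  refine ⟨fun x hx y hy => (hbracket x hx y hy).1, fun x hx y hy => (hbracket x hx y hy).2,
    ?_, fun x hx y hy => ?_⟩
  · rw [hnt1]
    exact disjoint_iff.mp
      ((hind1.disjoint_biSup (show (0 : ℤ) ∉ Ici 1 by simp)).symm.mono_right hn0_le)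
  · rw [hnt1] at hx ⊢
    exact lie_mem_biSup_Ici_of_mem_zero hbr1 1 hx (hn0_le hy)

/-- Under the conditions (★), set `ñ₁ := g^{(1)}_{≥1}` and
`ñ₂ := g^{(1)}_{≥1} ⊕ n₀` where `n₀ = a ⊕ (g^{(1)}₀ ∩ g^{(2)}_{≥2})`.  Then
`[ñ₂, ñ₂] ⊆ n₂`; in particular `ñ₂` is a Lie subalgebra of `g` with `ñ₂ = ñ₁ ⊕ n₀` and
`[ñ₁, n₀] ⊆ ñ₁`. -/
theorem statement11
    (g : Type*) [LieRing g] [LieAlgebra ℂ g] [FiniteDimensional ℂ g]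
    [LieAlgebra.IsSimple ℂ g]
    (Φ : g →ₗ[ℂ] g →ₗ[ℂ] ℂ)
    (hsymm : ∀ x y : g, Φ x y = Φ y x)
    (hinv : ∀ x y z : g, Φ ⁅x, y⁆ z = Φ x ⁅y, z⁆)
    (hnondeg : ∀ x : g, (∀ y : g, Φ x y = 0) → x = 0)
    (gr1 gr2 : ℤ → Submodule ℂ g)
    (hdec1 : DirectSum.IsInternal fun δ : ℤ => gr1 δ)
    (hdec2 : DirectSum.IsInternal fun δ : ℤ => gr2 δ)
    (hbidec : DirectSum.IsInternal fun p : ℤ × ℤ => gr1 p.1 ⊓ gr2 p.2)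
    (hbr1 : ∀ δ₁ δ₂ : ℤ, ∀ x ∈ gr1 δ₁, ∀ y ∈ gr1 δ₂, ⁅x, y⁆ ∈ gr1 (δ₁ + δ₂))
    (hbr2 : ∀ δ₁ δ₂ : ℤ, ∀ x ∈ gr2 δ₁, ∀ y ∈ gr2 δ₂, ⁅x, y⁆ ∈ gr2 (δ₁ + δ₂))
    (f1 f2 : g) (hf1 : f1 ∈ gr1 (-2)) (hf2 : f2 ∈ gr2 (-2))
    (hgood1inj : ∀ δ : ℤ, 1 ≤ δ → ∀ x ∈ gr1 δ, ⁅f1, x⁆ = 0 → x = 0)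
    (hgood1surj : ∀ δ : ℤ, δ ≤ 1 → ∀ y ∈ gr1 (δ - 2), ∃ x ∈ gr1 δ, ⁅f1, x⁆ = y)
    (hgood2inj : ∀ δ : ℤ, 1 ≤ δ → ∀ x ∈ gr2 δ, ⁅f2, x⁆ = 0 → x = 0)
    (hgood2surj : ∀ δ : ℤ, δ ≤ 1 → ∀ y ∈ gr2 (δ - 2), ∃ x ∈ gr2 δ, ⁅f2, x⁆ = y)
    (hstar1 : (⨆ d : ℤ, ⨆ _ : (2 : ℤ) ≤ d, gr1 d) ≤ ⨆ d : ℤ, ⨆ _ : (1 : ℤ) ≤ d, gr2 d)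
    (hstar2 : (⨆ d : ℤ, ⨆ _ : (1 : ℤ) ≤ d, gr2 d) ≤ ⨆ d : ℤ, ⨆ _ : (0 : ℤ) ≤ d, gr1 d)
    (hstar3 : gr1 1 ≤ (gr1 1 ⊓ gr2 0) ⊔ (gr1 1 ⊓ gr2 1) ⊔ (gr1 1 ⊓ gr2 2))
    (hstar4 : gr2 1 ≤ (gr2 1 ⊓ gr1 0) ⊔ (gr2 1 ⊓ gr1 1) ⊔ (gr2 1 ⊓ gr1 2))
    (hstar5 : f2 - f1 ∈ gr1 0 ⊓ gr2 (-2))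
    (aa : Submodule ℂ g)
    (ha1 : aa ≤ (gr2 1 ⊓ gr1 0) ⊓ LinearMap.ker (LieAlgebra.ad ℂ g f1 : g →ₗ[ℂ] g))
    (ha2 : ∀ u ∈ aa ⊔ (gr2 1 ⊓ gr1 2), ∀ v ∈ aa ⊔ (gr2 1 ⊓ gr1 2), Φ f2 ⁅u, v⁆ = 0)
    (ha3 : {v : g | v ∈ gr2 1 ∧ ∀ u ∈ aa ⊔ (gr2 1 ⊓ gr1 2), Φ f2 ⁅v, u⁆ = 0}
        = ↑(aa ⊔ (gr2 1 ⊓ gr1 1) ⊔ (gr2 1 ⊓ gr1 2)))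
    (n0 n1 n2 : Submodule ℂ g)
    (hn0 : n0 = aa ⊔ (gr1 0 ⊓ (⨆ d : ℤ, ⨆ _ : (2 : ℤ) ≤ d, gr2 d)))
    (hn1 : n1 = ((gr1 1 ⊓ gr2 1) ⊔ (gr1 1 ⊓ gr2 2)) ⊔ (⨆ d : ℤ, ⨆ _ : (2 : ℤ) ≤ d, gr1 d))
    (hn2 : n2 = (aa ⊔ (gr1 1 ⊓ gr2 1) ⊔ (gr1 2 ⊓ gr2 1)) ⊔ (⨆ d : ℤ, ⨆ _ : (2 : ℤ) ≤ d, gr2 d))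
    (nt1 nt2 : Submodule ℂ g)
    (hnt1 : nt1 = ⨆ d : ℤ, ⨆ _ : (1 : ℤ) ≤ d, gr1 d)
    (hnt2 : nt2 = nt1 ⊔ n0)
    :
    -- `[ñ₂, ñ₂] ⊆ n₂`
    (∀ x ∈ nt2, ∀ y ∈ nt2, ⁅x, y⁆ ∈ n2) ∧
    -- `ñ₂` is a Lie subalgebra
    (∀ x ∈ nt2, ∀ y ∈ nt2, ⁅x, y⁆ ∈ nt2) ∧
    -- `ñ₂ = ñ₁ ⊕ n₀`
    nt1 ⊓ n0 = ⊥ ∧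
    -- `[ñ₁, n₀] ⊆ ñ₁`
    (∀ x ∈ nt1, ∀ y ∈ n0, ⁅x, y⁆ ∈ nt1) :=
  statement11_general g gr1 gr2 hdec1 hdec2 hbidec hbr1 hbr2 f1 hstar1 hstar3 hstar4 aa ha1 n0 n2
    hn0 hn2 nt1 nt2 hnt1 hnt2
end

section
/- Let (a₁,…,a_r, a, 1^b) and (a₁,…,a_r, a+1, 1^{b-1}) be two partitions of n in type A (a₁ ≥ … ≥ a_r ≥ a+1), and let (f₁,H₁), (f₂,H₂) be the nilpotent elements and diagonal semisimple elements in sl_n determined by the pyramids P₁, P₂ described by: left-aligned rows a₁,…,a_r with a half-box shift to the hook part; P₁ has left-aligned hook (a,1^b); P₂ is obtained from P₁ by shifting the hook part half a box right and moving the column (1^b) one box left and one box down. Then the pairs (f₁,H₁), (f₂,H₂) satisfy the conditions (★): g^{(1)}_{≥2} ⊆ g^{(2)}_{≥1} ⊆ g^{(1)}_{≥0}, g^{(1)}_1 ⊆ ⊕_{δ=0}^{2} g_{1,δ}, g^{(2)}_1 ⊆ ⊕_{δ=0}^{2} g_{δ,1}, and f₀ = f₂ - f₁ ∈ g_{0,-2}.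 -/
open Matrix

namespace Statement18

attribute [local instance] LieRing.ofAssociativeRing

/-- The set of boxes of the pyramids: the rows `a₁, …, a_r`, the hook row of length `a`,
and the column `1^b`. -/
abbrev Box (r a b : ℕ) (A : Fin r → ℕ) : Type :=
  ((Σ i : Fin r, Fin (A i)) ⊕ (Fin a ⊕ Fin b))

variable (r a b : ℕ) (A : Fin r → ℕ)

/-- Abscissae of the box centers in the pyramid `P₁` (box width = 2 units): rows
`a₁, …, a_r` left-aligned (centers `2c+1`), the hook part shifted by half a box
(hook row centers `2t+2`, column centers `2`). -/
def x1 : Box r a b A → ℤ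
  | Sum.inl ⟨_, c⟩ => 2 * (c : ℤ) + 1
  | Sum.inr (Sum.inl t) => 2 * (t : ℤ) + 2
  | Sum.inr (Sum.inr _) => 2

/-- Abscissae in the pyramid `P₂`: the hook row is shifted half a box to the right
(centers `2t+3`) and the column `1^b` is moved one box to the left and one box down
(centers `1`). -/
def x2 : Box r a b A → ℤ
  | Sum.inl ⟨_, c⟩ => 2 * (c : ℤ) + 1
  | Sum.inr (Sum.inl t) => 2 * (t : ℤ) + 3
  | Sum.inr (Sum.inr _) => 1

/-- Row indices in `P₁`: the column boxes sit in their own rows above the hook row. -/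
def row1 : Box r a b A → ℕ
  | Sum.inl ⟨i, _⟩ => i
  | Sum.inr (Sum.inl _) => r
  | Sum.inr (Sum.inr s) => r + 1 + s

/-- Row indices in `P₂`: the bottom column box has moved down into the hook row. -/
def row2 : Box r a b A → ℕ
  | Sum.inl ⟨i, _⟩ => i
  | Sum.inr (Sum.inl _) => r
  | Sum.inr (Sum.inr s) => if (s : ℕ) = 0 then r else r + s

/-- The nilpotent element determined by a pyramid: the sum of the elementary matrices
`E_{j,k}` over pairs of horizontally adjacent boxes in the same row with
`x_j - x_k = -2`. -/
noncomputable def fmat (x : Box r a b A → ℤ) (row : Box r a b A → ℕ) :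
    Matrix (Box r a b A) (Box r a b A) ℂ :=
  ∑ j : Box r a b A, ∑ k : Box r a b A,
    if row j = row k ∧ x j + 2 = x k then Matrix.single j k 1 else 0

/-- The diagonal, traceless semisimple element determined by a pyramid; it satisfies
`[H, E_{j,k}] = (x_j - x_k) E_{j,k}`. -/
noncomputable def Hmat (x : Box r a b A → ℤ) :
    Matrix (Box r a b A) (Box r a b A) ℂ :=
  Matrix.diagonal (fun j => (x j : ℂ))
    - (((∑ j : Box r a b A, (x j : ℂ)) / (Fintype.card (Box r a b A) : ℂ)) •
        (1 : Matrix (Box r a b A) (Box r a b A) ℂ))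

/-!
Both `H₁` and `H₂` are diagonal, so every elementary matrix `E_{j,k}` is a common eigenvector of
`ad H₁` and `ad H₂`, with eigenvalues `x⁽¹⁾_j - x⁽¹⁾_k` and `x⁽²⁾_j - x⁽²⁾_k`. Splitting a matrix
into its entries, each inclusion of (★) therefore reduces to an implication between these two
differences for every pair of boxes, which is checked according to whether `j` and `k` lie in the
rows `a₁, …, a_r`, in the hook row or in the column. Similarly `f₂ - f₁` is supported on the
pairs of boxes adjacent in exactly one of the two pyramids.
-/

section AdGrading

variable {ι K : Type*} [Fintype ι] [DecidableEq ι]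

lemma ad_diagonal_sub_smul_one_apply [CommRing K] (d : ι → K) (c : K) (M : Matrix ι ι K)
    (j k : ι) :
    LieAlgebra.ad K (Matrix ι ι K) (diagonal d - c • 1) M j k = (d j - d k) * M j k := by
  simp only [LieAlgebra.ad_apply, Ring.lie_def, Matrix.sub_mul, Matrix.mul_sub, Matrix.sub_apply,
    Matrix.smul_mul, Matrix.mul_smul, Matrix.one_mul, Matrix.mul_one, Matrix.diagonal_mul,
    Matrix.mul_diagonal, Matrix.smul_apply, smul_eq_mul]
  ring

abbrev adEigenspace [Field K] (x : ι → ℤ) (c : K) (δ : ℤ) : Submodule K (Matrix ι ι K) :=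
  Module.End.eigenspace
    (LieAlgebra.ad K (Matrix ι ι K) (diagonal (fun j => (x j : K)) - c • 1)) (δ : K)

lemma mem_adEigenspace_iff [Field K] [CharZero K] {x : ι → ℤ} {c : K} {δ : ℤ}
    {M : Matrix ι ι K} :
    M ∈ adEigenspace x c δ ↔ ∀ j k, M j k ≠ 0 → x j - x k = δ := by
  rw [Module.End.mem_eigenspace_iff]
  constructor
  · intro h j k hM
    have hjk := congrFun (congrFun h j) k
    rw [ad_diagonal_sub_smul_one_apply, Matrix.smul_apply, smul_eq_mul] at hjk
    exact_mod_cast mul_right_cancel₀ hM hjk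
  · intro h
    ext j k
    rw [ad_diagonal_sub_smul_one_apply, Matrix.smul_apply, smul_eq_mul]
    by_cases hM : M j k = 0
    · simp [hM]
    · rw [← h j k hM]
      push_cast
      rfl

lemma adEigenspace_le_biSup_inf [Field K] [CharZero K] (x y : ι → ℤ) (c c' : K) (d : ℤ)
    (S : Finset ℤ) (hS : ∀ j k, x j - x k = d → y j - y k ∈ S) :
    adEigenspace x c d ≤ ⨆ e ∈ S, adEigenspace x c d ⊓ adEigenspace y c' e := by
  intro M hM
  rw [mem_adEigenspace_iff] at hM
  let part : ℤ → Matrix ι ι K := fun e => of fun j k => if y j - y k = e then M j k else 0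
  have hpart : ∀ e, part e ∈ adEigenspace x c d ⊓ adEigenspace y c' e := by
    intro e
    refine ⟨mem_adEigenspace_iff.2 fun j k hjk => ?_, mem_adEigenspace_iff.2 fun j k hjk => ?_⟩
    all_goals
      simp only [part, Matrix.of_apply, ne_eq, ite_eq_right_iff, Classical.not_imp] at hjk
    · exact hM j k hjk.2
    · exact hjk.1
  have hsum : M = ∑ e ∈ S, part e := by
    ext j k
    simp only [part, Matrix.sum_apply, Matrix.of_apply, Finset.sum_ite_eq]
    by_cases hM0 : M j k = 0
    · simp [hM0]
    · rw [if_pos (hS j k (hM j k hM0))]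
  rw [hsum]
  exact Submodule.sum_mem _ fun e he =>
    Submodule.mem_iSup_of_mem e <| Submodule.mem_iSup_of_mem he <| hpart e

lemma iSup_adEigenspace_le_iSup_adEigenspace [Field K] [CharZero K] (x y : ι → ℤ) (c c' : K)
    (m n : ℤ) (h : ∀ j k, m ≤ x j - x k → n ≤ y j - y k) :
    ⨆ d, ⨆ _ : m ≤ d, adEigenspace x c d ≤ ⨆ e, ⨆ _ : n ≤ e, adEigenspace y c' e := by
  let S : Finset ℤ := (Finset.univ.image fun p : ι × ι => y p.1 - y p.2).filter (n ≤ ·)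
  refine iSup₂_le fun d hd => (adEigenspace_le_biSup_inf x y c c' d S ?_).trans ?_
  · rintro j k rfl
    exact Finset.mem_filter.2 ⟨Finset.mem_image_of_mem _ (Finset.mem_univ (j, k)), h j k hd⟩
  · exact iSup₂_le fun e he => le_iSup₂_of_le e (Finset.mem_filter.1 he).2 inf_le_right

lemma adEigenspace_le_sup_inf_of_sub_mem_three [Field K] [CharZero K] (x y : ι → ℤ)
    (c c' : K) (d e₀ e₁ e₂ : ℤ)
    (h : ∀ j k, x j - x k = d → y j - y k ∈ ({e₀, e₁, e₂} : Finset ℤ)) :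
    adEigenspace x c d ≤ (adEigenspace x c d ⊓ adEigenspace y c' e₀)
      ⊔ (adEigenspace x c d ⊓ adEigenspace y c' e₁)
      ⊔ (adEigenspace x c d ⊓ adEigenspace y c' e₂) := by
  simpa only [Finset.iSup_insert, Finset.iSup_singleton, sup_assoc] using
    adEigenspace_le_biSup_inf x y c c' d _ h

end AdGrading

abbrev Adjacent {ι : Type*} (x : ι → ℤ) (row : ι → ℕ) (j k : ι) : Prop :=
  row j = row k ∧ x j + 2 = x k

section Pyramids

variable {r a b A} (j k : Box r a b A)

lemma fmat_apply (x : Box r a b A → ℤ) (row : Box r a b A → ℕ) :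
    fmat r a b A x row j k = if Adjacent x row j k then 1 else 0 := by
  simp only [fmat, Matrix.sum_apply, apply_ite (fun M : Matrix _ _ ℂ => M j k),
    Matrix.single_apply, Matrix.zero_apply]
  rw [Finset.sum_eq_single j, Finset.sum_eq_single k] <;> intros <;> simp_all

lemma one_le_x2_sub_of_two_le_x1_sub (h : 2 ≤ x1 r a b A j - x1 r a b A k) :
    1 ≤ x2 r a b A j - x2 r a b A k := by
  rcases j with ⟨i, c⟩ | t | s <;> rcases k with ⟨i', c'⟩ | t' | s' <;>
    simp only [x1, x2] at * <;> omega

lemma x1_sub_nonneg_of_one_le_x2_sub (h : 1 ≤ x2 r a b A j - x2 r a b A k) :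
    0 ≤ x1 r a b A j - x1 r a b A k := by
  rcases j with ⟨i, c⟩ | t | s <;> rcases k with ⟨i', c'⟩ | t' | s' <;>
    simp only [x1, x2] at * <;> omega

lemma x2_sub_mem_of_x1_sub_eq_one (h : x1 r a b A j - x1 r a b A k = 1) :
    x2 r a b A j - x2 r a b A k ∈ ({0, 1, 2} : Finset ℤ) := by
  simp only [Finset.mem_insert, Finset.mem_singleton]
  rcases j with ⟨i, c⟩ | t | s <;> rcases k with ⟨i', c'⟩ | t' | s' <;>
    simp only [x1, x2] at * <;> omega

lemma x1_sub_mem_of_x2_sub_eq_one (h : x2 r a b A j - x2 r a b A k = 1) :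
    x1 r a b A j - x1 r a b A k ∈ ({0, 1, 2} : Finset ℤ) := by
  simp only [Finset.mem_insert, Finset.mem_singleton]
  rcases j with ⟨i, c⟩ | t | s <;> rcases k with ⟨i', c'⟩ | t' | s' <;>
    simp only [x1, x2] at * <;> omega

lemma adjacent₂_of_adjacent₁ (h : Adjacent (x1 r a b A) (row1 r a b A) j k) :
    Adjacent (x2 r a b A) (row2 r a b A) j k := by
  obtain ⟨hrow, hx⟩ := h
  rcases j with ⟨i, c⟩ | t | s <;> rcases k with ⟨i', c'⟩ | t' | s' <;>
    simp only [Adjacent, x1, x2, row1, row2, true_and] at * <;> (try split_ifs) <;> omega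

/-- The only adjacency of `P₂` not present in `P₁` is the corner of the hook: the bottom box of
the column and the first box of the hook row, which lie one above the other in `P₁`. -/
lemma sub_eq_of_adjacent₂_of_not_adjacent₁ (h₂ : Adjacent (x2 r a b A) (row2 r a b A) j k)
    (h₁ : ¬Adjacent (x1 r a b A) (row1 r a b A) j k) :
    x1 r a b A j - x1 r a b A k = 0 ∧ x2 r a b A j - x2 r a b A k = -2 := by
  obtain ⟨hrow, hx⟩ := h₂
  rcases j with ⟨i, c⟩ | t | s <;> rcases k with ⟨i', c'⟩ | t' | s' <;>
    simp only [Adjacent, x1, x2, row1, row2, true_and] at * <;> (try split_ifs at hrow) <;> omega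

lemma fmat_sub_fmat_mem (c c' : ℂ) :
    fmat r a b A (x2 r a b A) (row2 r a b A) - fmat r a b A (x1 r a b A) (row1 r a b A)
      ∈ adEigenspace (x1 r a b A) c 0 ⊓ adEigenspace (x2 r a b A) c' (-2) := by
  have hsupp : ∀ j k, (fmat r a b A (x2 r a b A) (row2 r a b A)
      - fmat r a b A (x1 r a b A) (row1 r a b A)) j k ≠ 0 →
      x1 r a b A j - x1 r a b A k = 0 ∧ x2 r a b A j - x2 r a b A k = -2 := by
    intro j k hjk
    rw [Matrix.sub_apply, fmat_apply, fmat_apply] at hjk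
    by_cases h₁ : Adjacent (x1 r a b A) (row1 r a b A) j k
    · rw [if_pos (adjacent₂_of_adjacent₁ j k h₁), if_pos h₁, sub_self] at hjk
      exact (hjk rfl).elim
    · by_cases h₂ : Adjacent (x2 r a b A) (row2 r a b A) j k
      · exact sub_eq_of_adjacent₂_of_not_adjacent₁ j k h₂ h₁
      · rw [if_neg h₂, if_neg h₁, sub_self] at hjk
        exact (hjk rfl).elim
  exact ⟨mem_adEigenspace_iff.2 fun j k hjk => (hsupp j k hjk).1,
    mem_adEigenspace_iff.2 fun j k hjk => (hsupp j k hjk).2⟩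

end Pyramids

theorem statement18 :
    let gl := Matrix (Box r a b A) (Box r a b A) ℂ
    let f1m : gl := fmat r a b A (x1 r a b A) (row1 r a b A)
    let f2m : gl := fmat r a b A (x2 r a b A) (row2 r a b A)
    let H1m : gl := Hmat r a b A (x1 r a b A)
    let H2m : gl := Hmat r a b A (x2 r a b A)
    let eig1 : ℤ → Submodule ℂ gl := fun δ =>
      Module.End.eigenspace (LieAlgebra.ad ℂ gl H1m) (δ : ℂ)
    let eig2 : ℤ → Submodule ℂ gl := fun δ =>
      Module.End.eigenspace (LieAlgebra.ad ℂ gl H2m) (δ : ℂ)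
    ((⨆ d : ℤ, ⨆ _ : (2 : ℤ) ≤ d, eig1 d) ≤ ⨆ d : ℤ, ⨆ _ : (1 : ℤ) ≤ d, eig2 d) ∧
    ((⨆ d : ℤ, ⨆ _ : (1 : ℤ) ≤ d, eig2 d) ≤ ⨆ d : ℤ, ⨆ _ : (0 : ℤ) ≤ d, eig1 d) ∧
    (eig1 1 ≤ (eig1 1 ⊓ eig2 0) ⊔ (eig1 1 ⊓ eig2 1) ⊔ (eig1 1 ⊓ eig2 2)) ∧
    (eig2 1 ≤ (eig2 1 ⊓ eig1 0) ⊔ (eig2 1 ⊓ eig1 1) ⊔ (eig2 1 ⊓ eig1 2)) ∧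
    (f2m - f1m ∈ eig1 0 ⊓ eig2 (-2)) :=
  ⟨iSup_adEigenspace_le_iSup_adEigenspace _ _ _ _ 2 1 one_le_x2_sub_of_two_le_x1_sub,
    iSup_adEigenspace_le_iSup_adEigenspace _ _ _ _ 1 0 x1_sub_nonneg_of_one_le_x2_sub,
    adEigenspace_le_sup_inf_of_sub_mem_three _ _ _ _ 1 0 1 2 x2_sub_mem_of_x1_sub_eq_one,
    adEigenspace_le_sup_inf_of_sub_mem_three _ _ _ _ 1 0 1 2 x1_sub_mem_of_x2_sub_eq_one,
    fmat_sub_fmat_mem _ _⟩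

end Statement18
end
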